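/- arXiv:1804.00468 — 5 statements merged into one kernel-verified Lean document; each statement's English description precedes it below -/
import Mathlib

section
/- Let 1 < p < ∞ and let f be a non-negative measurable function on (0,∞). Define H(f)(x) = (1/x)∫₀ˣ f(t) dt. Then ‖H(f)‖_{L^p(0,∞)} ≤ (p/(p-1)) ‖f‖_{L^p(0,∞)}, and the constant p/(p-1) is sharp (i.e., it equals the operator norm of H on L^p(0,∞)). -/
/-!
Write `q = p / (p - 1)`. For the inequality, split `f = (f t^{1/(pq)}) t^{-1/(pq)}` on `(0, x)`;
Hölder's inequality gives `(Hf x)^p ≤ q^{p-1} x^{-1-1/q} ∫₀ˣ f^p t^{1/q}`, and exchanging the order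
of integration turns the integral of the right-hand side over `x > 0` into `q^p ∫ f^p`.

For sharpness, take `f = t^{b-1}` on `(1, ∞)` with `0 < b < 1/q` and put `ε = (1 - b) p - 1 > 0`.
Then `∫ f^p = 1/ε`, while `Hf x = (x^b - 1)/(b x)` and Bernoulli's inequality give
`b^p ∫ (Hf)^p ≥ 1/ε - p/(ε + b)`. An admissible constant `C` therefore satisfies
`1 ≤ (b C)^p + p ε/(ε + b)`, and letting `b → 1/q` (so `ε → 0`) yields `C ≥ q`.
-/

open MeasureTheory Set
open scoped ENNReal

/-- The classical one-dimensional Hardy operator `H f x = (1/x) ∫₀ˣ f`. -/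
noncomputable def hardyOp (f : ℝ → ℝ≥0∞) (x : ℝ) : ℝ≥0∞ :=
  (ENNReal.ofReal x)⁻¹ * ∫⁻ t in Ioo (0 : ℝ) x, f t

open Filter
open scoped Topology

theorem lintegral_Ioo_ofReal_rpow {a u x : ℝ} (ha : -1 < a) (hu : 0 ≤ u) (hux : u ≤ x) :
    ∫⁻ t in Ioo u x, ENNReal.ofReal (t ^ a) =
      ENNReal.ofReal ((x ^ (a + 1) - u ^ (a + 1)) / (a + 1)) := by
  rw [setLIntegral_congr Ioo_ae_eq_Ioc, ← ofReal_integral_eq_lintegral_ofReal,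
    ← intervalIntegral.integral_of_le hux, integral_rpow (Or.inl ha)]
  · exact (intervalIntegral.intervalIntegrable_rpow' ha).1
  · filter_upwards [ae_restrict_mem measurableSet_Ioc] with t ht
    exact Real.rpow_nonneg (hu.trans ht.1.le) a

theorem lintegral_Ioi_ofReal_rpow {a c : ℝ} (ha : a < -1) (hc : 0 < c) :
    ∫⁻ x in Ioi c, ENNReal.ofReal (x ^ a) = ENNReal.ofReal (-c ^ (a + 1) / (a + 1)) := by
  rw [← ofReal_integral_eq_lintegral_ofReal, integral_Ioi_rpow_of_lt ha hc]
  · exact integrableOn_Ioi_rpow_of_lt ha hc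
  · filter_upwards [ae_restrict_mem measurableSet_Ioi] with t ht
    exact Real.rpow_nonneg (hc.trans ht).le a

theorem ENNReal.rpow_one_div_le_mul_rpow_one_div_iff {p : ℝ} (hp : 0 < p) {a b c : ℝ≥0∞} :
    a ^ (1 / p) ≤ c * b ^ (1 / p) ↔ a ≤ c ^ p * b := by
  have hc : c = (c ^ p) ^ (1 / p) := by
    rw [← ENNReal.rpow_mul, mul_one_div_cancel hp.ne', ENNReal.rpow_one]
  rw [hc, ← ENNReal.mul_rpow_of_nonneg _ _ (one_div_pos.2 hp).le,
    ENNReal.rpow_le_rpow_iff (one_div_pos.2 hp), ← hc]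

theorem ENNReal.lintegral_mul_rpow_le_Lp_mul_Lq {α : Type*} [MeasurableSpace α] (μ : Measure α)
    {p q : ℝ} (hpq : p.HolderConjugate q) {g h : α → ℝ≥0∞} (hg : AEMeasurable g μ)
    (hh : AEMeasurable h μ) :
    (∫⁻ a, g a * h a ∂μ) ^ p ≤ (∫⁻ a, g a ^ p ∂μ) * (∫⁻ a, h a ^ q ∂μ) ^ (p - 1) := by
  have := ENNReal.rpow_le_rpow (ENNReal.lintegral_mul_le_Lp_mul_Lq μ hpq hg hh) hpq.nonneg
  rwa [ENNReal.mul_rpow_of_nonneg _ _ hpq.nonneg, ← ENNReal.rpow_mul, ← ENNReal.rpow_mul,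
    one_div_mul_cancel hpq.ne_zero, ENNReal.rpow_one, one_div_mul_eq_div,
    hpq.div_conj_eq_sub_one] at this

theorem lintegral_Ioi_lintegral_Ioo_comm {F : ℝ → ℝ → ℝ≥0∞} (hF : Measurable (Function.uncurry F)) :
    ∫⁻ x in Ioi 0, ∫⁻ t in Ioo 0 x, F x t = ∫⁻ t in Ioi 0, ∫⁻ x in Ioi t, F x t := by
  set G : ℝ → ℝ → ℝ≥0∞ := fun x t => if t < x then F x t else 0
  have hG : Measurable (Function.uncurry G) :=
    Measurable.ite (measurableSet_lt measurable_snd measurable_fst) hF measurable_const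
  calc ∫⁻ x in Ioi 0, ∫⁻ t in Ioo 0 x, F x t = ∫⁻ x in Ioi 0, ∫⁻ t in Ioi 0, G x t := by
        refine lintegral_congr fun x => ?_
        have hGx : ∀ t, G x t = (Iio x).indicator (F x) t := fun t => by
          simp only [G, indicator_apply, mem_Iio]
        rw [lintegral_congr hGx, lintegral_indicator measurableSet_Iio,
          Measure.restrict_restrict measurableSet_Iio, Iio_inter_Ioi]
    _ = ∫⁻ t in Ioi 0, ∫⁻ x in Ioi 0, G x t := lintegral_lintegral_swap hG.aemeasurable
    _ = ∫⁻ t in Ioi 0, ∫⁻ x in Ioi t, F x t := by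
        refine setLIntegral_congr_fun measurableSet_Ioi fun t ht => ?_
        have hGt : ∀ x, G x t = (Ioi t).indicator (F · t) x := fun x => by
          simp only [G, indicator_apply, mem_Ioi]
        rw [lintegral_congr hGt, lintegral_indicator measurableSet_Ioi,
          Measure.restrict_restrict measurableSet_Ioi,
          inter_eq_self_of_subset_left (Ioi_subset_Ioi (le_of_lt ht))]

section HolderConjugate

variable {p q : ℝ} (hpq : p.HolderConjugate q)
include hpq

theorem lintegral_Ioo_zero_ofReal_rpow_neg_inv {x : ℝ} (hx : 0 ≤ x) :
    ∫⁻ t in Ioo 0 x, ENNReal.ofReal (t ^ (-p⁻¹)) = ENNReal.ofReal (q * x ^ q⁻¹) := by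
  have h_exp : -p⁻¹ + 1 = q⁻¹ := by rw [← hpq.one_sub_inv]; ring
  have h_lt : -1 < -p⁻¹ := by linarith [inv_lt_one_of_one_lt₀ hpq.lt]
  rw [lintegral_Ioo_ofReal_rpow h_lt le_rfl hx, h_exp,
    Real.zero_rpow (inv_ne_zero hpq.symm.ne_zero), sub_zero, div_inv_eq_mul, mul_comm]

theorem hardyOp_rpow_le {f : ℝ → ℝ≥0∞} (hf : Measurable f) {x : ℝ} (hx : 0 < x) :
    hardyOp f x ^ p ≤ ENNReal.ofReal (q ^ (p - 1) * x ^ (-1 - q⁻¹)) *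
      ∫⁻ t in Ioo 0 x, f t ^ p * ENNReal.ofReal (t ^ q⁻¹) := by
  set s := (p * q)⁻¹ with hs
  have hsp : s * p = q⁻¹ := by
    rw [hs, mul_inv, mul_right_comm, inv_mul_cancel₀ hpq.ne_zero, one_mul]
  have hsq : s * q = p⁻¹ := by
    rw [hs, mul_inv, mul_assoc, inv_mul_cancel₀ hpq.symm.ne_zero, mul_one]
  have h_split : ∫⁻ t in Ioo 0 x, f t =
      ∫⁻ t in Ioo 0 x, f t * ENNReal.ofReal (t ^ s) * ENNReal.ofReal (t ^ (-s)) := by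
    refine setLIntegral_congr_fun measurableSet_Ioo fun t ht => ?_
    rw [mul_assoc, ← ENNReal.ofReal_mul (Real.rpow_nonneg ht.1.le _), ← Real.rpow_add ht.1]
    simp
  have h_first : ∫⁻ t in Ioo 0 x, (f t * ENNReal.ofReal (t ^ s)) ^ p =
      ∫⁻ t in Ioo 0 x, f t ^ p * ENNReal.ofReal (t ^ q⁻¹) := by
    refine setLIntegral_congr_fun measurableSet_Ioo fun t ht => ?_
    rw [ENNReal.mul_rpow_of_nonneg _ _ hpq.nonneg, ENNReal.ofReal_rpow_of_nonneg
      (Real.rpow_nonneg ht.1.le _) hpq.nonneg, ← Real.rpow_mul ht.1.le, hsp]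
  have h_second : ∫⁻ t in Ioo 0 x, ENNReal.ofReal (t ^ (-s)) ^ q =
      ENNReal.ofReal (q * x ^ q⁻¹) := by
    rw [← lintegral_Ioo_zero_ofReal_rpow_neg_inv hpq hx.le]
    refine setLIntegral_congr_fun measurableSet_Ioo fun t ht => ?_
    rw [ENNReal.ofReal_rpow_of_nonneg (Real.rpow_nonneg ht.1.le _) hpq.symm.nonneg,
      ← Real.rpow_mul ht.1.le, neg_mul, hsq]
  have h_holder := ENNReal.lintegral_mul_rpow_le_Lp_mul_Lq (volume.restrict (Ioo 0 x)) hpq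
    (g := fun t => f t * ENNReal.ofReal (t ^ s)) (h := fun t => ENNReal.ofReal (t ^ (-s)))
    (by fun_prop) (by fun_prop)
  rw [← h_split, h_first, h_second] at h_holder
  calc hardyOp f x ^ p
      = ENNReal.ofReal (x ^ (-p)) * (∫⁻ t in Ioo 0 x, f t) ^ p := by
        rw [hardyOp, ENNReal.mul_rpow_of_nonneg _ _ hpq.nonneg, ENNReal.inv_rpow,
          ENNReal.ofReal_rpow_of_pos hx, ← ENNReal.ofReal_inv_of_pos (Real.rpow_pos_of_pos hx p),
          Real.rpow_neg hx.le]
    _ ≤ ENNReal.ofReal (x ^ (-p)) * ((∫⁻ t in Ioo 0 x, f t ^ p * ENNReal.ofReal (t ^ q⁻¹)) *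
          ENNReal.ofReal ((q * x ^ q⁻¹) ^ (p - 1))) := by
        rw [← ENNReal.ofReal_rpow_of_nonneg
          (mul_nonneg hpq.symm.nonneg (Real.rpow_nonneg hx.le _)) hpq.sub_one_pos.le]
        gcongr
    _ = ENNReal.ofReal (q ^ (p - 1) * x ^ (-1 - q⁻¹)) *
          ∫⁻ t in Ioo 0 x, f t ^ p * ENNReal.ofReal (t ^ q⁻¹) := by
        have h_exp : -1 - q⁻¹ = -p + q⁻¹ * (p - 1) := by
          have h := hpq.div_conj_eq_sub_one
          rw [div_eq_mul_inv] at h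
          linear_combination (-1 : ℝ) * h
        have hxq := Real.rpow_nonneg hx.le q⁻¹
        rw [h_exp, Real.rpow_add hx, Real.mul_rpow hpq.symm.nonneg hxq, ← Real.rpow_mul hx.le,
          ENNReal.ofReal_mul (Real.rpow_nonneg hpq.symm.nonneg _),
          ENNReal.ofReal_mul (Real.rpow_nonneg hpq.symm.nonneg _),
          ENNReal.ofReal_mul (Real.rpow_nonneg hx.le _)]
        ring

theorem lintegral_Ioi_ofReal_rpow_neg_one_sub_inv {t : ℝ} (ht : 0 < t) :
    ∫⁻ x in Ioi t, ENNReal.ofReal (x ^ (-1 - q⁻¹)) = ENNReal.ofReal (q * t ^ (-q⁻¹)) := by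
  have hq := inv_pos.2 hpq.symm.pos
  rw [lintegral_Ioi_ofReal_rpow (by linarith) ht, show -1 - q⁻¹ + 1 = -q⁻¹ by ring, neg_div_neg_eq,
    div_inv_eq_mul, mul_comm]

theorem lintegral_rpow_hardyOp_le {f : ℝ → ℝ≥0∞} (hf : Measurable f) :
    ∫⁻ x in Ioi 0, hardyOp f x ^ p ≤ ENNReal.ofReal (q ^ p) * ∫⁻ t in Ioi 0, f t ^ p := by
  set w : ℝ → ℝ≥0∞ := fun x => ENNReal.ofReal (x ^ (-1 - q⁻¹))
  set g : ℝ → ℝ≥0∞ := fun t => f t ^ p * ENNReal.ofReal (t ^ q⁻¹)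
  have hq := hpq.symm.pos
  have hg : Measurable g := by fun_prop
  calc ∫⁻ x in Ioi 0, hardyOp f x ^ p
      ≤ ∫⁻ x in Ioi 0, ENNReal.ofReal (q ^ (p - 1)) * (w x * ∫⁻ t in Ioo 0 x, g t) := by
        refine setLIntegral_mono' measurableSet_Ioi fun x hx => ?_
        rw [← mul_assoc, ← ENNReal.ofReal_mul (Real.rpow_nonneg hq.le _)]
        exact hardyOp_rpow_le hpq hf hx
    _ = ENNReal.ofReal (q ^ (p - 1)) * ∫⁻ x in Ioi 0, ∫⁻ t in Ioo 0 x, w x * g t := by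
        simp_rw [lintegral_const_mul _ hg]
        exact lintegral_const_mul' _ _ ENNReal.ofReal_ne_top
    _ = ENNReal.ofReal (q ^ (p - 1)) * ∫⁻ t in Ioi 0, ∫⁻ x in Ioi t, w x * g t := by
        rw [lintegral_Ioi_lintegral_Ioo_comm (by fun_prop)]
    _ = ENNReal.ofReal (q ^ (p - 1)) * ∫⁻ t in Ioi 0, ENNReal.ofReal q * f t ^ p := by
        congr 1
        refine setLIntegral_congr_fun measurableSet_Ioi fun t ht => ?_
        rw [lintegral_mul_const _ (by fun_prop), lintegral_Ioi_ofReal_rpow_neg_one_sub_inv hpq ht,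
          mul_left_comm, ← ENNReal.ofReal_mul
          (mul_nonneg hq.le (Real.rpow_nonneg (le_of_lt ht) _)), mul_assoc,
          ← Real.rpow_add ht, neg_add_cancel, Real.rpow_zero, mul_one, mul_comm]
    _ = ENNReal.ofReal (q ^ p) * ∫⁻ t in Ioi 0, f t ^ p := by
        rw [lintegral_const_mul' _ _ ENNReal.ofReal_ne_top, ← mul_assoc,
          ← ENNReal.ofReal_mul (Real.rpow_nonneg hq.le _), ← Real.rpow_add_one hq.ne',
          sub_add_cancel]

end HolderConjugate

/-- Bernoulli's inequality, applied to `(x ^ b - 1) / x = x ^ (b - 1) * (1 - x ^ (-b))`. -/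
theorem rpow_sub_one_mul_le {b p x : ℝ} (hb : 0 ≤ b) (hp : 1 ≤ p) (hx : 1 ≤ x) :
    x ^ ((b - 1) * p) ≤ ((x ^ b - 1) / x) ^ p + p * x ^ ((b - 1) * p - b) := by
  have hx0 : 0 < x := one_pos.trans_le hx
  set y := x ^ (-b)
  have hy : y ≤ 1 := Real.rpow_le_one_of_one_le_of_nonpos hx (neg_nonpos.2 hb)
  have h_factor : (x ^ b - 1) / x = x ^ (b - 1) * (1 + -y) := by
    have hxb : 0 < x ^ b := Real.rpow_pos_of_pos hx0 b
    rw [Real.rpow_sub_one hx0.ne', show y = (x ^ b)⁻¹ from Real.rpow_neg hx0.le b]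
    field_simp
    ring
  have h_bernoulli := mul_le_mul_of_nonneg_left
    (one_add_mul_self_le_rpow_one_add (neg_le_neg hy) hp) (Real.rpow_nonneg hx0.le ((b - 1) * p))
  rw [h_factor, Real.mul_rpow (Real.rpow_nonneg hx0.le _) (by linarith), ← Real.rpow_mul hx0.le,
    sub_eq_add_neg _ b, Real.rpow_add hx0]
  linarith

noncomputable def tailPow (b : ℝ) : ℝ → ℝ≥0∞ :=
  (Ioi 1).indicator fun t => ENNReal.ofReal (t ^ (b - 1))

theorem measurable_tailPow (b : ℝ) : Measurable (tailPow b) :=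
  Measurable.indicator (by fun_prop) measurableSet_Ioi

theorem lintegral_tailPow_rpow {b p : ℝ} (hp : 0 < p) (hbp : 1 < (1 - b) * p) :
    ∫⁻ t in Ioi 0, tailPow b t ^ p = ENNReal.ofReal ((1 - b) * p - 1)⁻¹ := by
  have h_pow : ∀ t, tailPow b t ^ p =
      (Ioi 1).indicator (fun t => ENNReal.ofReal (t ^ ((b - 1) * p))) t := by
    intro t
    by_cases ht : t ∈ Ioi 1
    · have ht0 : 0 ≤ t := zero_le_one.trans ht.le
      rw [tailPow, indicator_of_mem ht, indicator_of_mem ht,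
        ENNReal.ofReal_rpow_of_nonneg (Real.rpow_nonneg ht0 _) hp.le, ← Real.rpow_mul ht0]
    · rw [tailPow, indicator_of_notMem ht, indicator_of_notMem ht, ENNReal.zero_rpow_of_pos hp]
  rw [lintegral_congr h_pow, lintegral_indicator measurableSet_Ioi,
    Measure.restrict_restrict measurableSet_Ioi,
    inter_eq_self_of_subset_left (Ioi_subset_Ioi zero_le_one),
    lintegral_Ioi_ofReal_rpow (by linarith) one_pos, Real.one_rpow, neg_div, ← div_neg, one_div]
  congr 2
  ring

theorem hardyOp_tailPow {b x : ℝ} (hb : 0 < b) (hx : 1 < x) :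
    hardyOp (tailPow b) x = ENNReal.ofReal ((x ^ b - 1) / x / b) := by
  have hx0 : 0 < x := one_pos.trans hx
  rw [hardyOp, tailPow, lintegral_indicator measurableSet_Ioi,
    Measure.restrict_restrict measurableSet_Ioi, Ioi_inter_Ioo, max_eq_left zero_le_one,
    lintegral_Ioo_ofReal_rpow (by linarith) zero_le_one hx.le, sub_add_cancel, Real.one_rpow,
    ← ENNReal.ofReal_inv_of_pos hx0, ← ENNReal.ofReal_mul (inv_nonneg.2 hx0.le)]
  congr 1
  ring

theorem ofReal_rpow_le_hardyOp_tailPow_rpow_add {p b x : ℝ} (hp : 1 ≤ p) (hb : 0 < b)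
    (hx : 1 < x) :
    ENNReal.ofReal (x ^ ((b - 1) * p)) ≤ ENNReal.ofReal (b ^ p) * hardyOp (tailPow b) x ^ p +
      ENNReal.ofReal p * ENNReal.ofReal (x ^ ((b - 1) * p - b)) := by
  have hp0 : 0 < p := one_pos.trans_le hp
  have hx0 : 0 < x := one_pos.trans hx
  have hHx : 0 ≤ (x ^ b - 1) / x :=
    div_nonneg (sub_nonneg.2 (Real.one_le_rpow hx.le hb.le)) hx0.le
  rw [hardyOp_tailPow hb hx, ENNReal.ofReal_rpow_of_nonneg (div_nonneg hHx hb.le) hp0.le,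
    ← ENNReal.ofReal_mul (Real.rpow_nonneg hb.le _), ← ENNReal.ofReal_mul hp0.le,
    ← ENNReal.ofReal_add (by positivity) (by positivity), Real.div_rpow hHx hb.le,
    mul_div_cancel₀ _ (Real.rpow_pos_of_pos hb p).ne']
  exact ENNReal.ofReal_le_ofReal (rpow_sub_one_mul_le hb.le hp hx.le)

theorem ofReal_inv_le_lintegral_rpow_hardyOp_tailPow {p b : ℝ} (hp : 1 ≤ p) (hb : 0 < b)
    (hbp : 1 < (1 - b) * p) :
    ENNReal.ofReal ((1 - b) * p - 1)⁻¹ ≤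
      ENNReal.ofReal (b ^ p) * (∫⁻ x in Ioi 0, hardyOp (tailPow b) x ^ p) +
        ENNReal.ofReal (p * ((1 - b) * p - 1 + b)⁻¹) := by
  have hp0 : 0 < p := one_pos.trans_le hp
  calc ENNReal.ofReal ((1 - b) * p - 1)⁻¹
      = ∫⁻ x in Ioi 1, ENNReal.ofReal (x ^ ((b - 1) * p)) := by
        rw [lintegral_Ioi_ofReal_rpow (by linarith) one_pos, Real.one_rpow, neg_div, ← div_neg,
          one_div]
        congr 2
        ring
    _ ≤ ∫⁻ x in Ioi 1, (ENNReal.ofReal (b ^ p) * hardyOp (tailPow b) x ^ p +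
          ENNReal.ofReal p * ENNReal.ofReal (x ^ ((b - 1) * p - b))) :=
        setLIntegral_mono' measurableSet_Ioi fun x hx =>
          ofReal_rpow_le_hardyOp_tailPow_rpow_add hp hb hx
    _ ≤ ENNReal.ofReal (b ^ p) * (∫⁻ x in Ioi 0, hardyOp (tailPow b) x ^ p) +
          ENNReal.ofReal (p * ((1 - b) * p - 1 + b)⁻¹) := by
        rw [lintegral_add_right _ (by fun_prop), lintegral_const_mul' _ _ ENNReal.ofReal_ne_top,
          lintegral_const_mul' _ _ ENNReal.ofReal_ne_top,
          lintegral_Ioi_ofReal_rpow (by linarith) one_pos, Real.one_rpow,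
          ← ENNReal.ofReal_mul hp0.le]
        refine add_le_add (mul_le_mul_right (lintegral_mono_set
          (Ioi_subset_Ioi (zero_le_one' ℝ))) _) (le_of_eq ?_)
        rw [neg_div, ← div_neg, one_div]
        congr 3
        ring

theorem one_le_of_lintegral_rpow_hardyOp_le {p b r : ℝ} (hp : 1 ≤ p) (hb : 0 < b)
    (hbp : 1 < (1 - b) * p) (hr : 0 ≤ r)
    (hH : ∀ f : ℝ → ℝ≥0∞, Measurable f →
      ∫⁻ x in Ioi 0, hardyOp f x ^ p ≤ ENNReal.ofReal r * ∫⁻ t in Ioi 0, f t ^ p) :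
    1 ≤ b ^ p * r + p * ((1 - b) * p - 1) / ((1 - b) * p - 1 + b) := by
  have h_lower := ofReal_inv_le_lintegral_rpow_hardyOp_tailPow hp hb hbp
  have h_upper := hH _ (measurable_tailPow b)
  rw [lintegral_tailPow_rpow (one_pos.trans_le hp) hbp] at h_upper
  set ε := (1 - b) * p - 1
  have hε : 0 < ε := by linarith
  have h_real : ε⁻¹ ≤ b ^ p * (r * ε⁻¹) + p * (ε + b)⁻¹ := by
    rw [← ENNReal.ofReal_le_ofReal_iff (by positivity), ENNReal.ofReal_add (by positivity)
      (by positivity), ENNReal.ofReal_mul (by positivity), ENNReal.ofReal_mul hr]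
    exact h_lower.trans (by gcongr)
  calc 1 = ε * ε⁻¹ := (mul_inv_cancel₀ hε.ne').symm
    _ ≤ ε * (b ^ p * (r * ε⁻¹) + p * (ε + b)⁻¹) := mul_le_mul_of_nonneg_left h_real hε.le
    _ = b ^ p * r + p * ε / (ε + b) := by field_simp

theorem ofReal_rpow_le_of_lintegral_rpow_hardyOp_le {p q : ℝ} (hpq : p.HolderConjugate q) {C : ℝ≥0∞}
    (hH : ∀ f : ℝ → ℝ≥0∞, Measurable f →
      ∫⁻ x in Ioi 0, hardyOp f x ^ p ≤ C * ∫⁻ t in Ioi 0, f t ^ p) :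
    ENNReal.ofReal (q ^ p) ≤ C := by
  rcases eq_or_ne C ⊤ with rfl | hC
  · exact le_top
  rw [← ENNReal.ofReal_toReal hC] at hH ⊢
  set r := C.toReal
  have hq := hpq.symm.pos
  have h_crit : (1 - q⁻¹) * p - 1 = 0 := by
    rw [← hpq.one_sub_inv, sub_sub_cancel, inv_mul_cancel₀ hpq.ne_zero, sub_self]
  have h_lim : Tendsto (fun b => b ^ p * r + p * ((1 - b) * p - 1) / ((1 - b) * p - 1 + b))
      (𝓝[<] q⁻¹) (𝓝 (q⁻¹ ^ p * r)) := by
    have h_cont : ContinuousAt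
        (fun b => b ^ p * r + p * ((1 - b) * p - 1) / ((1 - b) * p - 1 + b)) q⁻¹ := by
      refine ((Real.continuousAt_rpow_const _ _ (Or.inr hpq.nonneg)).mul continuousAt_const).add
        (ContinuousAt.div (by fun_prop) (by fun_prop) ?_)
      rw [h_crit, zero_add]
      exact (inv_pos.2 hq).ne'
    have := h_cont.tendsto.mono_left (nhdsWithin_le_nhds (s := Iio q⁻¹))
    rwa [h_crit, mul_zero, zero_div, add_zero] at this
  have h_one : 1 ≤ q⁻¹ ^ p * r := by
    refine ge_of_tendsto h_lim (mem_of_superset (Ioo_mem_nhdsLT (inv_pos.2 hq)) fun b hb => ?_)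
    refine one_le_of_lintegral_rpow_hardyOp_le hpq.lt.le hb.1 ?_ ENNReal.toReal_nonneg hH
    linarith [mul_lt_mul_of_pos_right (sub_lt_sub_left hb.2 1) hpq.pos]
  rw [Real.inv_rpow hq.le, inv_mul_eq_div, one_le_div (Real.rpow_pos_of_pos hq p)] at h_one
  exact ENNReal.ofReal_le_ofReal h_one

/-- Hardy's inequality on `L^p(0,∞)` with sharp constant `p/(p-1)`. -/
theorem hardy_inequality_sharp (p : ℝ) (hp : 1 < p) :
    (∀ f : ℝ → ℝ≥0∞, Measurable f →
      (∫⁻ x in Ioi (0 : ℝ), hardyOp f x ^ p) ^ (1 / p)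
        ≤ ENNReal.ofReal (p / (p - 1)) * (∫⁻ x in Ioi (0 : ℝ), f x ^ p) ^ (1 / p)) ∧
    (∀ C : ℝ≥0∞,
      (∀ f : ℝ → ℝ≥0∞, Measurable f →
        (∫⁻ x in Ioi (0 : ℝ), hardyOp f x ^ p) ^ (1 / p)
          ≤ C * (∫⁻ x in Ioi (0 : ℝ), f x ^ p) ^ (1 / p)) →
      ENNReal.ofReal (p / (p - 1)) ≤ C) := by
  have hpq : p.HolderConjugate (p / (p - 1)) := (Real.holderConjugate_iff_eq_conjExponent hp).2 rfl
  have hp0 : 0 < p := hpq.pos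
  have h_pow : ENNReal.ofReal (p / (p - 1)) ^ p = ENNReal.ofReal ((p / (p - 1)) ^ p) :=
    ENNReal.ofReal_rpow_of_nonneg hpq.symm.nonneg hp0.le
  refine ⟨fun f hf => ?_, fun C hC => ?_⟩
  · rw [ENNReal.rpow_one_div_le_mul_rpow_one_div_iff hp0, h_pow]
    exact lintegral_rpow_hardyOp_le hpq hf
  · rw [← ENNReal.rpow_le_rpow_iff hp0, h_pow]
    exact ofReal_rpow_le_of_lintegral_rpow_hardyOp_le hpq fun f hf =>
      (ENNReal.rpow_one_div_le_mul_rpow_one_div_iff hp0).1 (hC f hf)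
end

section
/- Let 1 < p < ∞ and α < p - 1, and let f be a non-negative measurable function on (0,∞). Then ∫₀^∞ |H(f)(x)|^p x^α dx ≤ (p/(p-1-α))^p ∫₀^∞ |f(x)|^p x^α dx, and the constant p/(p-1-α) is sharp. -/
/-!
Writing `H f x = ∫₀¹ f (s x) ds`, Hölder's inequality in `s` against the weight
`s ^ (-(α + 1) / p)` followed by Tonelli reduces the inequality to the dilation identity
`∫ f (s x) ^ p x ^ α dx = s ^ (-(α + 1)) ∫ f ^ p x ^ α` and to
`∫₀¹ s ^ (-(α + 1) / p) ds = p / (p - 1 - α)`.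

For sharpness, `t ^ (-s)` is an eigenfunction of `H` with eigenvalue `1 / (1 - s)`, and `H f`
on `(0, 1)` only sees `f` on `(0, 1)`. For the restriction `f` of `t ^ (-s)` to `(0, 1)` with
`s = (1 + α - ε) / p` we have `f ^ p x ^ α = x ^ (ε - 1)` there, so the left-hand side is at least
`(p / (p - 1 - α + ε)) ^ p` times the right-hand side `1 / ε`; let `ε → 0`.
-/

open MeasureTheory Set
open scoped ENNReal Topology

lemma setLIntegral_Ioo_zero_ofReal_rpow {c x : ℝ} (hc : -1 < c) (hx : 0 < x) :
    ∫⁻ t in Ioo 0 x, ENNReal.ofReal (t ^ c) = ENNReal.ofReal (x ^ (c + 1) / (c + 1)) := by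
  have hint : IntegrableOn (fun t : ℝ => t ^ c) (Ioo 0 x) :=
    (intervalIntegral.intervalIntegrable_rpow' hc).1.mono_set Ioo_subset_Ioc_self
  rw [← ofReal_integral_eq_lintegral_ofReal hint
      (ae_restrict_of_forall_mem measurableSet_Ioo fun t ht => Real.rpow_nonneg ht.1.le c),
    integral_Ioc_eq_integral_Ioo.symm, ← intervalIntegral.integral_of_le hx.le,
    integral_rpow (Or.inl hc), Real.zero_rpow (by linarith), sub_zero]

lemma ofReal_rpow_rpow_mul_ofReal_rpow {x a b c : ℝ} (hx : 0 < x) :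
    ENNReal.ofReal (x ^ a) ^ b * ENNReal.ofReal (x ^ c) = ENNReal.ofReal (x ^ (a * b + c)) := by
  rw [ENNReal.ofReal_rpow_of_pos (Real.rpow_pos_of_pos hx a), ← Real.rpow_mul hx.le,
    ← ENNReal.ofReal_mul (Real.rpow_nonneg hx.le _), ← Real.rpow_add hx]

lemma setLIntegral_comp_mul_left {c : ℝ} (hc : 0 < c) {S : Set ℝ} (hS : MeasurableSet S)
    (g : ℝ → ℝ≥0∞) :
    ∫⁻ x in S, g (c * x) = ENNReal.ofReal c⁻¹ * ∫⁻ x in (c * ·) '' S, g x := by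
  rw [lintegral_image_eq_lintegral_abs_deriv_mul hS
      (fun _ _ => (hasDerivAt_const_mul c).hasDerivWithinAt) (mul_right_injective₀ hc.ne').injOn,
    abs_of_pos hc, lintegral_const_mul' _ _ ENNReal.ofReal_ne_top, ← mul_assoc,
    ← ENNReal.ofReal_mul (inv_nonneg.2 hc.le), inv_mul_cancel₀ hc.ne', ENNReal.ofReal_one, one_mul]

lemma rpow_lintegral_le_rpow_lintegral_mul_lintegral {X : Type*} [MeasurableSpace X]
    {μ : Measure X} {p : ℝ} (hp : 1 < p) {f w : X → ℝ≥0∞} (hf : AEMeasurable f μ)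
    (hw : AEMeasurable w μ) (hw0 : ∀ᵐ a ∂μ, w a ≠ 0) (hwt : ∀ᵐ a ∂μ, w a ≠ ∞) :
    (∫⁻ a, f a ∂μ) ^ p ≤ (∫⁻ a, w a ∂μ) ^ (p - 1) * ∫⁻ a, f a ^ p * w a ^ (1 - p) ∂μ := by
  have hp0 : 0 < p := by linarith
  have hpq : p.HolderConjugate (p / (p - 1)) := (Real.holderConjugate_iff_eq_conjExponent hp).2 rfl
  set r := (p - 1) / p
  have hr : 1 / (p / (p - 1)) = r := one_div_div _ _
  -- Hölder's inequality for `f = (f * w ^ (-r)) * w ^ r`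
  have hsplit : ∫⁻ a, f a ∂μ = ∫⁻ a, ((fun a => f a * w a ^ (-r)) * fun a => w a ^ r) a ∂μ := by
    refine lintegral_congr_ae ?_
    filter_upwards [hw0, hwt] with a h0 ht
    rw [Pi.mul_apply, mul_assoc, ← ENNReal.rpow_add _ _ h0 ht, neg_add_cancel, ENNReal.rpow_zero,
      mul_one]
  have hholder := ENNReal.lintegral_mul_le_Lp_mul_Lq μ hpq
    (f := fun a => f a * w a ^ (-r)) (g := fun a => w a ^ r) (hf.mul (hw.pow_const _))
    (hw.pow_const r)
  rw [← hsplit, hr] at hholder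
  have hleft : ∀ a, (f a * w a ^ (-r)) ^ p = f a ^ p * w a ^ (1 - p) := fun a => by
    rw [ENNReal.mul_rpow_of_nonneg _ _ hp0.le, ← ENNReal.rpow_mul]
    congr 2
    simp only [r]
    field_simp
    ring
  have hright : ∀ a, (w a ^ r) ^ (p / (p - 1)) = w a := fun a => by
    rw [← ENNReal.rpow_mul, ← hr, one_div_mul_cancel (by positivity), ENNReal.rpow_one]
  simp only [hleft, hright] at hholder
  calc (∫⁻ a, f a ∂μ) ^ p
      ≤ ((∫⁻ a, f a ^ p * w a ^ (1 - p) ∂μ) ^ (1 / p) * (∫⁻ a, w a ∂μ) ^ r) ^ p :=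
        ENNReal.rpow_le_rpow hholder hp0.le
    _ = (∫⁻ a, w a ∂μ) ^ (p - 1) * ∫⁻ a, f a ^ p * w a ^ (1 - p) ∂μ := by
        rw [ENNReal.mul_rpow_of_nonneg _ _ hp0.le, ← ENNReal.rpow_mul, ← ENNReal.rpow_mul,
          one_div_mul_cancel hp0.ne', ENNReal.rpow_one, div_mul_cancel₀ _ hp0.ne', mul_comm]

lemma setLIntegral_Ioi_zero_comp_mul_left_mul_rpow {c : ℝ} (hc : 0 < c) (g : ℝ → ℝ≥0∞) (α : ℝ) :
    ∫⁻ x in Ioi 0, g (c * x) * ENNReal.ofReal (x ^ α)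
      = ENNReal.ofReal (c ^ (-(α + 1))) * ∫⁻ x in Ioi 0, g x * ENNReal.ofReal (x ^ α) := by
  have hweight : ∀ x ∈ Ioi (0 : ℝ), g (c * x) * ENNReal.ofReal (x ^ α)
      = ENNReal.ofReal (c ^ (-α)) * (g (c * x) * ENNReal.ofReal ((c * x) ^ α)) := fun x hx => by
    rw [mul_left_comm, ← ENNReal.ofReal_mul (by positivity), Real.mul_rpow hc.le (le_of_lt hx),
      ← mul_assoc, ← Real.rpow_add hc, neg_add_cancel, Real.rpow_zero, one_mul]
  rw [setLIntegral_congr_fun measurableSet_Ioi hweight,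
    lintegral_const_mul' _ _ ENNReal.ofReal_ne_top,
    setLIntegral_comp_mul_left hc measurableSet_Ioi (fun y => g y * ENNReal.ofReal (y ^ α)),
    image_mul_left_Ioi hc, mul_zero, ← mul_assoc, ← ENNReal.ofReal_mul (by positivity),
    ← Real.rpow_neg_one, ← Real.rpow_add hc, neg_add]

lemma lintegral_Ioi_zero_lintegral_comp_mul_mul_rpow {S : Set ℝ} (hS : MeasurableSet S)
    (hS0 : S ⊆ Ioi 0) {g v : ℝ → ℝ≥0∞} (hg : Measurable g) (hv : Measurable v) (α : ℝ) :
    ∫⁻ x in Ioi 0, (∫⁻ s in S, g (s * x) * v s) * ENNReal.ofReal (x ^ α)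
      = (∫⁻ s in S, v s * ENNReal.ofReal (s ^ (-(α + 1))))
          * ∫⁻ x in Ioi 0, g x * ENNReal.ofReal (x ^ α) := by
  calc ∫⁻ x in Ioi 0, (∫⁻ s in S, g (s * x) * v s) * ENNReal.ofReal (x ^ α)
      = ∫⁻ x in Ioi 0, ∫⁻ s in S, v s * (g (s * x) * ENNReal.ofReal (x ^ α)) := by
        refine lintegral_congr fun x => ?_
        rw [← lintegral_mul_const' _ _ ENNReal.ofReal_ne_top]
        exact lintegral_congr fun s => by ring
    _ = ∫⁻ s in S, ∫⁻ x in Ioi 0, v s * (g (s * x) * ENNReal.ofReal (x ^ α)) :=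
        lintegral_lintegral_swap (by fun_prop)
    _ = ∫⁻ s in S, v s * ENNReal.ofReal (s ^ (-(α + 1)))
          * ∫⁻ x in Ioi 0, g x * ENNReal.ofReal (x ^ α) := by
        refine setLIntegral_congr_fun hS fun s hs => ?_
        rw [lintegral_const_mul _ (by fun_prop),
          setLIntegral_Ioi_zero_comp_mul_left_mul_rpow (hS0 hs), mul_assoc]
    _ = _ := lintegral_mul_const _ (by fun_prop)

lemma hardyOp_eq_lintegral_comp_mul {x : ℝ} (hx : 0 < x) (f : ℝ → ℝ≥0∞) :
    hardyOp f x = ∫⁻ s in Ioo 0 1, f (s * x) := by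
  simp only [mul_comm _ x]
  rw [setLIntegral_comp_mul_left hx measurableSet_Ioo, image_mul_left_Ioo hx, mul_zero, mul_one,
    ENNReal.ofReal_inv_of_pos hx, hardyOp]

lemma lintegral_hardyOp_rpow_le {p α : ℝ} (hp : 1 < p) (hα : α < p - 1) {f : ℝ → ℝ≥0∞}
    (hf : Measurable f) :
    ∫⁻ x in Ioi 0, hardyOp f x ^ p * ENNReal.ofReal (x ^ α)
      ≤ ENNReal.ofReal ((p / (p - 1 - α)) ^ p)
          * ∫⁻ x in Ioi 0, f x ^ p * ENNReal.ofReal (x ^ α) := by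
  have hp0 : 0 < p := by linarith
  set κ := p / (p - 1 - α)
  have hκ : 0 < κ := div_pos hp0 (by linarith)
  set N := ∫⁻ x in Ioi 0, f x ^ p * ENNReal.ofReal (x ^ α)
  -- the exponent `-(α + 1) / p` is the one for which the two integrals in `s` below coincide
  set w : ℝ → ℝ≥0∞ := fun s => ENNReal.ofReal (s ^ (-((α + 1) / p)))
  have hw : ∫⁻ s in Ioo 0 1, w s = ENNReal.ofReal κ := by
    have hγ : -((α + 1) / p) + 1 = (p - 1 - α) / p := by field_simp; ring
    have hγ0 : 0 < (p - 1 - α) / p := div_pos (by linarith) hp0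
    rw [setLIntegral_Ioo_zero_ofReal_rpow (by linarith) one_pos, Real.one_rpow, hγ, one_div_div]
  have hpoint : ∀ x ∈ Ioi (0 : ℝ), hardyOp f x ^ p
      ≤ ENNReal.ofReal κ ^ (p - 1) * ∫⁻ s in Ioo 0 1, f (s * x) ^ p * w s ^ (1 - p) := by
    intro x hx
    rw [hardyOp_eq_lintegral_comp_mul hx, ← hw]
    refine rpow_lintegral_le_rpow_lintegral_mul_lintegral hp
      (hf.comp (measurable_id.mul_const x)).aemeasurable (by fun_prop)
      (ae_restrict_of_forall_mem measurableSet_Ioo fun s hs => ?_)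
      (Filter.Eventually.of_forall fun _ => ENNReal.ofReal_ne_top)
    exact (ENNReal.ofReal_pos.2 (Real.rpow_pos_of_pos hs.1 _)).ne'
  have hweight : ∀ s ∈ Ioo (0 : ℝ) 1,
      w s ^ (1 - p) * ENNReal.ofReal (s ^ (-(α + 1))) = w s := by
    intro s hs
    rw [ofReal_rpow_rpow_mul_ofReal_rpow hs.1]
    congr 2
    field_simp
    ring
  calc ∫⁻ x in Ioi 0, hardyOp f x ^ p * ENNReal.ofReal (x ^ α)
      ≤ ∫⁻ x in Ioi 0, ENNReal.ofReal κ ^ (p - 1)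
          * ((∫⁻ s in Ioo 0 1, f (s * x) ^ p * w s ^ (1 - p)) * ENNReal.ofReal (x ^ α)) :=
        setLIntegral_mono' measurableSet_Ioi fun x hx => by
          rw [← mul_assoc]; gcongr; exact hpoint x hx
    _ = ENNReal.ofReal κ ^ (p - 1)
          * ((∫⁻ s in Ioo 0 1, w s ^ (1 - p) * ENNReal.ofReal (s ^ (-(α + 1)))) * N) := by
        rw [lintegral_const_mul' _ _ (ENNReal.rpow_ne_top_of_nonneg (by linarith) (by simp)),
          lintegral_Ioi_zero_lintegral_comp_mul_mul_rpow measurableSet_Ioo (fun s hs => hs.1)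
            (hf.pow_const p) (by fun_prop)]
    _ = ENNReal.ofReal (κ ^ p) * N := by
        rw [setLIntegral_congr_fun measurableSet_Ioo hweight, hw, ← mul_assoc,
          ENNReal.ofReal_rpow_of_pos hκ, ← ENNReal.ofReal_mul (by positivity),
          ← Real.rpow_add_one hκ.ne', sub_add_cancel]

lemma hardyOp_ofReal_rpow_neg {s x : ℝ} (hs : s < 1) (hx : 0 < x) :
    hardyOp (fun t => ENNReal.ofReal (t ^ (-s))) x
      = ENNReal.ofReal (1 - s)⁻¹ * ENNReal.ofReal (x ^ (-s)) := by
  rw [hardyOp, setLIntegral_Ioo_zero_ofReal_rpow (by linarith) hx, ← ENNReal.ofReal_inv_of_pos hx,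
    ← ENNReal.ofReal_mul (inv_nonneg.2 hx.le), ← ENNReal.ofReal_mul (inv_nonneg.2 (by linarith)),
    Real.rpow_add hx, Real.rpow_one]
  congr 1
  field_simp
  ring

noncomputable def powOnUnitInterval (s : ℝ) : ℝ → ℝ≥0∞ :=
  (Ioo 0 1).indicator fun t => ENNReal.ofReal (t ^ (-s))

lemma lintegral_powOnUnitInterval_rpow_mul {s p : ℝ} (hp : 0 < p) (α : ℝ) :
    ∫⁻ x in Ioi 0, powOnUnitInterval s x ^ p * ENNReal.ofReal (x ^ α)
      = ∫⁻ x in Ioo 0 1, ENNReal.ofReal (x ^ (-s * p + α)) := by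
  have hind : (fun x => powOnUnitInterval s x ^ p * ENNReal.ofReal (x ^ α))
      = (Ioo 0 1).indicator fun x => ENNReal.ofReal (x ^ (-s)) ^ p * ENNReal.ofReal (x ^ α) := by
    funext x
    by_cases hx : x ∈ Ioo (0 : ℝ) 1 <;> simp [powOnUnitInterval, hx, hp]
  rw [hind, lintegral_indicator measurableSet_Ioo, Measure.restrict_restrict measurableSet_Ioo,
    inter_eq_left.2 fun x hx => hx.1]
  exact setLIntegral_congr_fun measurableSet_Ioo fun x hx => ofReal_rpow_rpow_mul_ofReal_rpow hx.1

lemma hardyOp_powOnUnitInterval {s x : ℝ} (hs : s < 1) (hx : x ∈ Ioo 0 1) :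
    hardyOp (powOnUnitInterval s) x = ENNReal.ofReal (1 - s)⁻¹ * ENNReal.ofReal (x ^ (-s)) := by
  rw [← hardyOp_ofReal_rpow_neg hs hx.1, hardyOp, hardyOp]
  congr 1
  exact setLIntegral_congr_fun measurableSet_Ioo fun t ht =>
    indicator_of_mem (show t ∈ Ioo (0 : ℝ) 1 from ⟨ht.1, ht.2.trans hx.2⟩) _

lemma mul_lintegral_le_lintegral_hardyOp_powOnUnitInterval_rpow_mul {s p : ℝ} (hs : s < 1)
    (hp : 0 < p) (α : ℝ) :
    ENNReal.ofReal (1 - s)⁻¹ ^ p * ∫⁻ x in Ioo 0 1, ENNReal.ofReal (x ^ (-s * p + α))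
      ≤ ∫⁻ x in Ioi 0, hardyOp (powOnUnitInterval s) x ^ p * ENNReal.ofReal (x ^ α) := by
  rw [← lintegral_const_mul' _ _ (ENNReal.rpow_ne_top_of_nonneg hp.le ENNReal.ofReal_ne_top)]
  refine le_of_eq_of_le (setLIntegral_congr_fun measurableSet_Ioo fun x hx => ?_)
    (lintegral_mono_set fun x (hx : x ∈ Ioo 0 1) => hx.1)
  rw [hardyOp_powOnUnitInterval hs hx, ENNReal.mul_rpow_of_nonneg _ _ hp.le, mul_assoc,
    ofReal_rpow_rpow_mul_ofReal_rpow hx.1]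

lemma ofReal_div_add_le_of_lintegral_hardyOp_rpow_le {p α ε : ℝ} {C : ℝ≥0∞} (hp : 0 < p)
    (hε : 0 < ε) (hαε : α - ε < p - 1)
    (hC : ∀ f : ℝ → ℝ≥0∞, Measurable f →
      (∫⁻ x in Ioi (0 : ℝ), hardyOp f x ^ p * ENNReal.ofReal (x ^ α))
        ≤ C ^ p * ∫⁻ x in Ioi (0 : ℝ), f x ^ p * ENNReal.ofReal (x ^ α)) :
    ENNReal.ofReal (p / (p - 1 - α + ε)) ≤ C := by
  set s := (1 + α - ε) / p
  have hs : s < 1 := (div_lt_one hp).2 (by linarith)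
  have hs' : (1 - s)⁻¹ = p / (p - 1 - α + ε) := by
    rw [← one_div, one_sub_div hp.ne', one_div_div]; ring_nf
  have hexp : -s * p + α = ε - 1 := by simp only [s]; field_simp; ring
  have hI : ∫⁻ x in Ioo 0 1, ENNReal.ofReal (x ^ (ε - 1)) = ENNReal.ofReal (1 / ε) := by
    rw [setLIntegral_Ioo_zero_ofReal_rpow (by linarith) one_pos, Real.one_rpow, sub_add_cancel]
  have hmeas : Measurable (powOnUnitInterval s) :=
    Measurable.indicator (by fun_prop) measurableSet_Ioo
  have key := (mul_lintegral_le_lintegral_hardyOp_powOnUnitInterval_rpow_mul hs hp α).trans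
    (hC _ hmeas)
  rw [lintegral_powOnUnitInterval_rpow_mul hp, hexp, hI,
    ENNReal.mul_le_mul_iff_left (ENNReal.ofReal_pos.2 (by positivity)).ne' ENNReal.ofReal_ne_top,
    ENNReal.rpow_le_rpow_iff hp, hs'] at key
  exact key

lemma ofReal_div_le_of_lintegral_hardyOp_rpow_le {p α : ℝ} {C : ℝ≥0∞} (hp : 0 < p)
    (hα : α < p - 1)
    (hC : ∀ f : ℝ → ℝ≥0∞, Measurable f →
      (∫⁻ x in Ioi (0 : ℝ), hardyOp f x ^ p * ENNReal.ofReal (x ^ α))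
        ≤ C ^ p * ∫⁻ x in Ioi (0 : ℝ), f x ^ p * ENNReal.ofReal (x ^ α)) :
    ENNReal.ofReal (p / (p - 1 - α)) ≤ C := by
  have hcont : ContinuousAt (fun ε => ENNReal.ofReal (p / (p - 1 - α + ε))) 0 :=
    ENNReal.continuous_ofReal.continuousAt.comp
      (continuousAt_const.div (continuousAt_const.add continuousAt_id) (by simp; linarith))
  have hlim : Filter.Tendsto (fun ε => ENNReal.ofReal (p / (p - 1 - α + ε))) (𝓝[>] 0)
      (𝓝 (ENNReal.ofReal (p / (p - 1 - α)))) := by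
    simpa using hcont.tendsto.mono_left nhdsWithin_le_nhds
  exact le_of_tendsto hlim (eventually_nhdsWithin_of_forall fun ε (hε : 0 < ε) =>
    ofReal_div_add_le_of_lintegral_hardyOp_rpow_le hp hε (by linarith) hC)

/-- Weighted Hardy inequality:
`∫₀^∞ (Hf)^p x^α dx ≤ (p/(p-1-α))^p ∫₀^∞ f^p x^α dx`, with sharp constant `p/(p-1-α)`. -/
theorem weighted_hardy_inequality_sharp (p α : ℝ) (hp : 1 < p) (hα : α < p - 1) :
    (∀ f : ℝ → ℝ≥0∞, Measurable f →
      (∫⁻ x in Ioi (0 : ℝ), hardyOp f x ^ p * ENNReal.ofReal (x ^ α))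
        ≤ ENNReal.ofReal ((p / (p - 1 - α)) ^ p) *
          ∫⁻ x in Ioi (0 : ℝ), f x ^ p * ENNReal.ofReal (x ^ α)) ∧
    (∀ C : ℝ≥0∞,
      (∀ f : ℝ → ℝ≥0∞, Measurable f →
        (∫⁻ x in Ioi (0 : ℝ), hardyOp f x ^ p * ENNReal.ofReal (x ^ α))
          ≤ C ^ p * ∫⁻ x in Ioi (0 : ℝ), f x ^ p * ENNReal.ofReal (x ^ α)) →
      ENNReal.ofReal (p / (p - 1 - α)) ≤ C) :=
  ⟨fun _ hf => lintegral_hardyOp_rpow_le hp hα hf,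
    fun _ hC => ofReal_div_le_of_lintegral_hardyOp_rpow_le (by linarith) hα hC⟩
end

section
/- For n ≥ 1, q > 1, 0 < β < n with n/(q'β) > 1, one has ∫₀^∞ (s^n(1+s^{qβ})^{-n/(qβ)})^q s^{q(β-n)} s^{n-1} n ds = (n/(qβ)) · B(n/(qβ)+1, n/(q'β)-1). -/
open MeasureTheory Set
open scoped ENNReal

/-- The Euler Beta function `B(z,w) = ∫₀¹ t^(z-1) (1-t)^(w-1) dt`. -/
noncomputable def betaFn (z w : ℝ) : ℝ :=
  ∫ t in Ioo (0 : ℝ) 1, t ^ (z - 1) * (1 - t) ^ (w - 1)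

/-!
With `c = qβ`, `a = n/(qβ) + 1` and `b = n/(q'β) - 1` one has `c a - 1 = qβ + n - 1` and
`a + b = nq/(qβ)`, so the integrand is `n s^(c a - 1) (1 + s^c)^(-(a+b))`. The substitution
`u = s^c` turns its integral into `c⁻¹ ∫₀^∞ u^(a-1) (1+u)^(-(a+b)) du`, and `u = t/(1-t)` turns
that into `c⁻¹ B(a, b)`. Both substitutions are identities of integrals, valid whether or not
they converge.
-/

open Real

lemma image_div_one_sub_Ioo : (fun t : ℝ => t / (1 - t)) '' Ioo 0 1 = Ioi 0 := by
  ext u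
  constructor
  · rintro ⟨t, ⟨ht0, ht1⟩, rfl⟩
    exact div_pos ht0 (sub_pos.2 ht1)
  · intro (hu : 0 < u)
    refine ⟨u / (1 + u), ⟨by positivity, (div_lt_one (by positivity)).2 (by linarith)⟩, ?_⟩
    field_simp
    ring

lemma injOn_div_one_sub : InjOn (fun t : ℝ => t / (1 - t)) (Ioo 0 1) := by
  intro a ⟨_, ha1⟩ b ⟨_, hb1⟩ hab
  have := sub_pos.2 ha1
  have := sub_pos.2 hb1
  field_simp at hab
  linarith

lemma hasDerivAt_div_one_sub {t : ℝ} (ht : t ≠ 1) :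
    HasDerivAt (fun t : ℝ => t / (1 - t)) (((1 - t) ^ 2)⁻¹) t := by
  have h1t : 1 - t ≠ 0 := sub_ne_zero.2 (Ne.symm ht)
  refine ((hasDerivAt_id' t).div ((hasDerivAt_id' t).const_sub 1) h1t).congr_deriv ?_
  field_simp
  ring

theorem betaFn_eq_integral_Ioi (a b : ℝ) :
    betaFn a b = ∫ u in Ioi (0 : ℝ), u ^ (a - 1) * (1 + u) ^ (-(a + b)) := by
  symm
  rw [← image_div_one_sub_Ioo, integral_image_eq_integral_abs_deriv_smul measurableSet_Ioo
    (fun t ht => (hasDerivAt_div_one_sub ht.2.ne).hasDerivWithinAt) injOn_div_one_sub]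
  refine setIntegral_congr_fun measurableSet_Ioo fun t ⟨ht0, ht1⟩ => ?_
  have h1t : 0 < 1 - t := sub_pos.2 ht1
  have h1 : 1 + t / (1 - t) = (1 - t)⁻¹ := by field_simp; ring
  have h2 : (1 - t) ^ (a + b) = (1 - t) ^ (b - 1) * (1 - t) ^ (a - 1) * (1 - t) ^ 2 := by
    rw [← rpow_natCast, ← rpow_add h1t, ← rpow_add h1t]
    push_cast
    ring_nf
  rw [smul_eq_mul, h1, abs_of_pos (by positivity), div_rpow ht0.le h1t.le, inv_rpow h1t.le,
    rpow_neg h1t.le, inv_inv, h2]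
  field_simp

theorem integral_Ioi_rpow_mul_one_add_rpow_eq_inv_mul_betaFn {c : ℝ} (hc : 0 < c) (a b : ℝ) :
    ∫ s in Ioi (0 : ℝ), s ^ (c * a - 1) * (1 + s ^ c) ^ (-(a + b)) = c⁻¹ * betaFn a b := by
  rw [betaFn_eq_integral_Ioi,
    ← integral_comp_rpow_Ioi_of_pos hc (g := fun u => u ^ (a - 1) * (1 + u) ^ (-(a + b))),
    ← integral_const_mul]
  refine setIntegral_congr_fun measurableSet_Ioi fun s (hs : 0 < s) => ?_
  rw [smul_eq_mul, ← rpow_mul hs.le, show c * a - 1 = (c - 1) + c * (a - 1) by ring,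
    rpow_add hs]
  field_simp

theorem radial_Lq_norm_extremal_general (n : ℕ) (q β : ℝ)
    (hq : 1 < q) (hβ0 : 0 < β) :
    ∫ s in Ioi (0 : ℝ),
        (s ^ (n : ℝ) * (1 + s ^ (q * β)) ^ (-((n : ℝ) / (q * β)))) ^ q *
          s ^ (q * (β - (n : ℝ))) * s ^ ((n : ℝ) - 1) * (n : ℝ)
      = ((n : ℝ) / (q * β)) *
          betaFn ((n : ℝ) / (q * β) + 1) ((n : ℝ) / ((q / (q - 1)) * β) - 1) := by
  have hc : 0 < q * β := mul_pos (one_pos.trans hq) hβ0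
  set a : ℝ := n / (q * β) + 1 with ha
  set b : ℝ := n / ((q / (q - 1)) * β) - 1 with hb
  have h_exp : q * β * a - 1 = n * q + q * (β - n) + (n - 1) := by
    rw [ha]
    field_simp
    ring
  have h_sum : -(a + b) = -(n / (q * β)) * q := by
    have := (sub_pos.2 hq).ne'
    rw [ha, hb]
    field_simp
    ring
  calc _ = ∫ s in Ioi (0 : ℝ),
          (n : ℝ) * (s ^ (q * β * a - 1) * (1 + s ^ (q * β)) ^ (-(a + b))) := by
        refine setIntegral_congr_fun measurableSet_Ioi fun s (hs : 0 < s) => ?_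
        rw [h_exp, h_sum, rpow_add hs, rpow_add hs, mul_rpow (by positivity) (by positivity),
          ← rpow_mul hs.le, ← rpow_mul (by positivity)]
        ring
    _ = _ := by
        rw [integral_const_mul, integral_Ioi_rpow_mul_one_add_rpow_eq_inv_mul_betaFn hc,
          ← mul_assoc, div_eq_mul_inv]

/-- Evaluation of the left-hand side of the fractional Hardy inequality at the
extremal function, after the polar-coordinate reduction. -/
theorem radial_Lq_norm_extremal (n : ℕ) (hn : 1 ≤ n) (q β : ℝ)
    (hq : 1 < q) (hβ0 : 0 < β) (hβn : β < n)
    (hbig : 1 < (n : ℝ) / ((q / (q - 1)) * β)) :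
    ∫ s in Ioi (0 : ℝ),
        (s ^ (n : ℝ) * (1 + s ^ (q * β)) ^ (-((n : ℝ) / (q * β)))) ^ q *
          s ^ (q * (β - (n : ℝ))) * s ^ ((n : ℝ) - 1) * (n : ℝ)
      = ((n : ℝ) / (q * β)) *
          betaFn ((n : ℝ) / (q * β) + 1) ((n : ℝ) / ((q / (q - 1)) * β) - 1) :=
  radial_Lq_norm_extremal_general n q β hq hβ0
end

section
/- Let 1 ≤ p < q < ∞, 0 ≤ β_i < n_i, and let weights |x|^α = ∏|x_i|^{α_i}, |x|^γ = ∏|x_i|^{γ_i} on ℝ^{n₁}×⋯×ℝ^{n_m}. Then the operator norm of 𝓗_{β₁,…,β_m} from L^p(|x|^γ) to L^q(|x|^α) equals its operator norm restricted to radial functions (functions of (|x₁|,…,|x_m|) only). In particular, for every f, ‖𝓗(f)‖_{L^q(|x|^α)}/‖f‖_{L^p(|x|^γ)} ≤ ‖𝓗(g_{|f|})‖_{L^q(|x|^α)}/‖g_{|f|}‖_{L^p(|x|^γ)}, where g_{|f|} is the spherical average of |f|. -/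
open MeasureTheory Set
open scoped ENNReal

/-- Surface area `ω_n = 2 π^{n/2} / Γ(n/2)` of the unit sphere `S^{n-1}`. -/
noncomputable def omegaN (n : ℕ) : ℝ :=
  2 * Real.pi ^ ((n : ℝ) / 2) / Real.Gamma ((n : ℝ) / 2)

/-- The fractional Hardy operator `𝓗_{β₁,…,β_m}` on `ℝ^{n₁} × ⋯ × ℝ^{n_m}`. -/
noncomputable def prodFracHardy (m : ℕ) (n : Fin m → ℕ) (β : Fin m → ℝ)
    (f : (∀ i, EuclideanSpace ℝ (Fin (n i))) → ℝ≥0∞)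
    (x : ∀ i, EuclideanSpace ℝ (Fin (n i))) : ℝ≥0∞ :=
  (∏ i, (volume (Metric.ball (0 : EuclideanSpace ℝ (Fin (n i))) ‖x i‖)) ^
      (β i / (n i : ℝ) - 1)) *
    ∫⁻ y in {y : ∀ i, EuclideanSpace ℝ (Fin (n i)) | ∀ i, ‖y i‖ < ‖x i‖}, f y

/-- The spherical average `g_f` of `f` on `ℝ^{n₁} × ⋯ × ℝ^{n_m}`. -/
noncomputable def sphAvgM (m : ℕ) (n : Fin m → ℕ)
    (f : (∀ i, EuclideanSpace ℝ (Fin (n i))) → ℝ≥0∞)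
    (x : ∀ i, EuclideanSpace ℝ (Fin (n i))) : ℝ≥0∞ :=
  (ENNReal.ofReal (∏ i, omegaN (n i)))⁻¹ *
    ∫⁻ ξ : ∀ i, Metric.sphere (0 : EuclideanSpace ℝ (Fin (n i))) 1,
        f (fun i => ‖x i‖ • (ξ i : EuclideanSpace ℝ (Fin (n i))))
      ∂(Measure.pi fun i => (volume : Measure (EuclideanSpace ℝ (Fin (n i)))).toSphere)

/-- The quotient `‖𝓗 f‖_{L^q(|x|^α)} / ‖f‖_{L^p(|x|^γ)}`. -/
noncomputable def hardyRatio (m : ℕ) (n : Fin m → ℕ) (β α γ : Fin m → ℝ) (p q : ℝ)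
    (f : (∀ i, EuclideanSpace ℝ (Fin (n i))) → ℝ≥0∞) : ℝ≥0∞ :=
  (∫⁻ x, prodFracHardy m n β f x ^ q *
      ENNReal.ofReal (∏ i, ‖x i‖ ^ α i)) ^ (1 / q) /
  (∫⁻ x, f x ^ p * ENNReal.ofReal (∏ i, ‖x i‖ ^ γ i)) ^ (1 / p)

/-!
Polar coordinates on each factor split Lebesgue measure on `ℝ^{n₁} × ⋯ × ℝ^{n_m}` into a
measure in the radii `r = (|x₁|, …, |x_m|)` times the product of the sphere measures, and the
spherical average `g_f` is the average of `f` over the product of spheres of radii `r`. The set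
`{|y_i| < |x_i| ∀ i}` is a union of such products of spheres, so `𝓗 g_f = 𝓗 f`, while the weight
`|x|^γ` is constant on each of them, so Jensen's inequality for the average gives
`‖g_f‖_{L^p(|x|^γ)} ≤ ‖f‖_{L^p(|x|^γ)}`. Hence the ratio can only grow when `f` is replaced by
the radial function `g_f`.
-/

theorem rpow_laverage_le_laverage_rpow {α : Type*} [MeasurableSpace α] {μ : Measure α}
    {f : α → ℝ≥0∞} (hf : AEMeasurable f μ) {p : ℝ} (hp : 1 ≤ p) :
    (⨍⁻ x, f x ∂μ) ^ p ≤ ⨍⁻ x, f x ^ p ∂μ := by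
  set P := (μ univ)⁻¹ • μ
  have hp0 : 0 < p := zero_lt_one.trans_le hp
  -- `P` is a probability measure, or zero when `μ univ ∈ {0, ∞}`.
  have hP : P univ ≤ 1 := by
    simp only [P, Measure.smul_apply, smul_eq_mul]
    exact ENNReal.inv_mul_le_one _
  have hL1 := eLpNorm'_le_eLpNorm'_mul_rpow_measure_univ one_pos hp
    (hf.smul_measure (μ univ)⁻¹).aestronglyMeasurable (μ := P)
  simp only [eLpNorm'_eq_lintegral_enorm, enorm_eq_self, ENNReal.rpow_one, div_one] at hL1
  have hmass : P univ ^ (1 - 1 / p) ≤ 1 :=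
    ENNReal.rpow_le_one hP (sub_nonneg.2 ((div_le_one hp0).2 hp))
  rw [laverage_eq', laverage_eq']
  calc (∫⁻ x, f x ∂P) ^ p ≤ ((∫⁻ x, f x ^ p ∂P) ^ (1 / p)) ^ p := by
        gcongr
        exact hL1.trans (mul_le_of_le_one_right' hmass)
    _ = ∫⁻ x, f x ^ p ∂P := by
      rw [← ENNReal.rpow_mul, one_div_mul_cancel hp0.ne', ENNReal.rpow_one]

section PiProd

variable {ι : Type*} [Fintype ι] {X Y : ι → Type*}
  [∀ i, MeasurableSpace (X i)] [∀ i, MeasurableSpace (Y i)]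

def MeasurableEquiv.piProdEquivProdPi : (∀ i, X i × Y i) ≃ᵐ (∀ i, X i) × (∀ i, Y i) where
  toEquiv := Equiv.arrowProdEquivProdArrow ι X Y
  measurable_toFun := by dsimp [Equiv.arrowProdEquivProdArrow]; fun_prop
  measurable_invFun := by dsimp [Equiv.arrowProdEquivProdArrow]; fun_prop

theorem measurePreserving_piProdEquivProdPi (μ : ∀ i, Measure (X i)) (ν : ∀ i, Measure (Y i))
    [∀ i, SigmaFinite (μ i)] [∀ i, SigmaFinite (ν i)] :
    MeasurePreserving MeasurableEquiv.piProdEquivProdPi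
      (.pi fun i => (μ i).prod (ν i)) ((Measure.pi μ).prod (Measure.pi ν)) where
  measurable := MeasurableEquiv.piProdEquivProdPi.measurable
  map_eq := by
    have hμ := Measure.FiniteSpanningSetsIn.pi fun i => (μ i).toFiniteSpanningSetsIn
    have hν := Measure.FiniteSpanningSetsIn.pi fun i => (ν i).toFiniteSpanningSetsIn
    refine (Measure.FiniteSpanningSetsIn.ext ?_ (isPiSystem_pi.prod isPiSystem_pi)
      (hμ.prod hν) ?_).symm
    · exact (generateFrom_eq_prod generateFrom_pi generateFrom_pi
        hμ.isCountablySpanning hν.isCountablySpanning).symm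
    · rintro _ ⟨_, ⟨s, _, rfl⟩, _, ⟨t, _, rfl⟩, rfl⟩
      have hbox : MeasurableEquiv.piProdEquivProdPi ⁻¹' (univ.pi s ×ˢ univ.pi t) =
          univ.pi fun i => s i ×ˢ t i := by
        ext; simp [MeasurableEquiv.piProdEquivProdPi, Set.mem_pi, forall_and]
      rw [MeasurableEquiv.map_apply, hbox]
      simp_rw [Measure.pi_pi, Measure.prod_prod, Measure.pi_pi, Finset.prod_mul_distrib]

end PiProd

section Polar

variable {E : Type*} [NormedAddCommGroup E] [NormedSpace ℝ E]

theorem norm_smul_sphere (ξ : Metric.sphere (0 : E) 1) (r : Ioi (0 : ℝ)) :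
    ‖(r : ℝ) • (ξ : E)‖ = r := by
  rw [norm_smul, norm_eq_of_mem_sphere, mul_one, Real.norm_of_nonneg r.2.out.le]

theorem measurePreserving_smul_sphere [MeasurableSpace E] [BorelSpace E] [FiniteDimensional ℝ E]
    [Nontrivial E] (μ : Measure E) [μ.IsAddHaarMeasure] :
    MeasurePreserving (fun p : Metric.sphere (0 : E) 1 × Ioi (0 : ℝ) => (p.2 : ℝ) • (p.1 : E))
      (μ.toSphere.prod (Measure.volumeIoiPow (Module.finrank ℝ E - 1))) μ := by
  have hval : MeasurePreserving (Subtype.val : ({0}ᶜ : Set E) → E) (μ.comap Subtype.val) μ :=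
    ⟨measurable_subtype_coe, by
      rw [map_comap_subtype_coe (measurableSet_singleton 0).compl, restrict_compl_singleton]⟩
  exact hval.comp (μ.measurePreserving_homeomorphUnitSphereProd.symm
    (homeomorphUnitSphereProd E).toMeasurableEquiv)

end Polar

section SphericalMean

variable {ι : Type*} [Fintype ι] {E : ι → Type*} [∀ i, NormedAddCommGroup (E i)]
  [∀ i, NormedSpace ℝ (E i)] [∀ i, MeasurableSpace (E i)]

noncomputable def sphericalMean (μ : ∀ i, Measure (E i)) (f : (∀ i, E i) → ℝ≥0∞)
    (x : ∀ i, E i) : ℝ≥0∞ :=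
  ⨍⁻ ξ, f (fun i => ‖x i‖ • (ξ i : E i)) ∂Measure.pi fun i => (μ i).toSphere

variable {μ : ∀ i, Measure (E i)}

theorem exists_sphericalMean_eq_comp_norm (f : (∀ i, E i) → ℝ≥0∞) :
    ∃ h : (ι → ℝ) → ℝ≥0∞, ∀ x, sphericalMean μ f x = h fun i => ‖x i‖ :=
  ⟨fun v => ⨍⁻ ξ, f (fun i => v i • (ξ i : E i)) ∂Measure.pi fun i => (μ i).toSphere,
    fun _ => rfl⟩

theorem sphericalMean_smul_sphere (f : (∀ i, E i) → ℝ≥0∞) (r : ι → Ioi (0 : ℝ))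
    (ξ : ∀ i, Metric.sphere (0 : E i) 1) :
    sphericalMean μ f (fun i => (r i : ℝ) • (ξ i : E i))
      = ⨍⁻ η, f (fun i => (r i : ℝ) • (η i : E i)) ∂Measure.pi fun i => (μ i).toSphere := by
  simp only [sphericalMean, norm_smul_sphere]

variable [∀ i, BorelSpace (E i)] [∀ i, FiniteDimensional ℝ (E i)] [∀ i, (μ i).IsAddHaarMeasure]

theorem measurable_sphericalMean {f : (∀ i, E i) → ℝ≥0∞} (hf : Measurable f) :
    Measurable (sphericalMean μ f) := by
  refine Measurable.lintegral_prod_right'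
    (f := fun xξ : (∀ i, E i) × (∀ i, Metric.sphere (0 : E i) 1) =>
      f fun i => ‖xξ.1 i‖ • (xξ.2 i : E i)) (hf.comp ?_)
  fun_prop

variable [∀ i, Nontrivial (E i)]

theorem lintegral_pi_eq_lintegral_polar {F : (∀ i, E i) → ℝ≥0∞} (hF : Measurable F) :
    ∫⁻ x, F x ∂Measure.pi μ
      = ∫⁻ r, ∫⁻ ξ, F (fun i => (r i : ℝ) • (ξ i : E i)) ∂Measure.pi (fun i => (μ i).toSphere)
          ∂Measure.pi (fun i => Measure.volumeIoiPow (Module.finrank ℝ (E i) - 1)) := by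
  have hpolar := measurePreserving_pi _ μ fun i => measurePreserving_smul_sphere (μ i)
  have hswap := (measurePreserving_piProdEquivProdPi (fun i => (μ i).toSphere)
    (fun i => Measure.volumeIoiPow (Module.finrank ℝ (E i) - 1))).symm
  have hFpolar := hF.comp hpolar.measurable
  rw [← hpolar.lintegral_comp hF]
  refine (hswap.lintegral_comp hFpolar).symm.trans ?_
  exact lintegral_prod_symm _ (hFpolar.comp (MeasurableEquiv.measurable _)).aemeasurable

theorem lintegral_pi_mul_radial {G : (∀ i, E i) → ℝ≥0∞} (hG : Measurable G)
    {w : (ι → ℝ) → ℝ≥0∞} (hw : Measurable w) :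
    ∫⁻ x, G x * w (fun i => ‖x i‖) ∂Measure.pi μ
      = ∫⁻ r, (∫⁻ ξ, G (fun i => (r i : ℝ) • (ξ i : E i)) ∂Measure.pi fun i => (μ i).toSphere)
          * w (fun i => r i)
          ∂Measure.pi (fun i => Measure.volumeIoiPow (Module.finrank ℝ (E i) - 1)) := by
  rw [lintegral_pi_eq_lintegral_polar (F := fun x => G x * w fun i => ‖x i‖) (by fun_prop)]
  simp only [norm_smul_sphere]
  exact lintegral_congr fun r => lintegral_mul_const _ (hG.comp (by fun_prop))

theorem lintegral_sphericalMean_mul_radial {f : (∀ i, E i) → ℝ≥0∞} (hf : Measurable f)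
    {w : (ι → ℝ) → ℝ≥0∞} (hw : Measurable w) :
    ∫⁻ x, sphericalMean μ f x * w (fun i => ‖x i‖) ∂Measure.pi μ
      = ∫⁻ x, f x * w (fun i => ‖x i‖) ∂Measure.pi μ := by
  rw [lintegral_pi_mul_radial (measurable_sphericalMean hf) hw, lintegral_pi_mul_radial hf hw]
  simp only [sphericalMean_smul_sphere, lintegral_const, mul_comm _ (Measure.pi _ univ),
    measure_mul_laverage]

theorem lintegral_sphericalMean_rpow_mul_radial_le {f : (∀ i, E i) → ℝ≥0∞} (hf : Measurable f)
    {p : ℝ} (hp : 1 ≤ p) {w : (ι → ℝ) → ℝ≥0∞} (hw : Measurable w) :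
    ∫⁻ x, sphericalMean μ f x ^ p * w (fun i => ‖x i‖) ∂Measure.pi μ
      ≤ ∫⁻ x, f x ^ p * w (fun i => ‖x i‖) ∂Measure.pi μ := by
  rw [lintegral_pi_mul_radial ((measurable_sphericalMean hf).pow_const p) hw,
    lintegral_pi_mul_radial (hf.pow_const p) hw]
  refine lintegral_mono fun r => mul_le_mul_left ?_ _
  simp only [sphericalMean_smul_sphere, lintegral_const, mul_comm _ (Measure.pi _ univ),
    ← measure_mul_laverage _
      fun η : ∀ i, Metric.sphere (0 : E i) 1 => f (fun i => (r i : ℝ) • (η i : E i)) ^ p]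
  gcongr
  exact rpow_laverage_le_laverage_rpow (hf.comp (by fun_prop)).aemeasurable hp

theorem setLIntegral_sphericalMean_of_radial {f : (∀ i, E i) → ℝ≥0∞} (hf : Measurable f)
    {s : Set (ι → ℝ)} (hs : MeasurableSet s) :
    ∫⁻ x in (fun x i => ‖x i‖) ⁻¹' s, sphericalMean μ f x ∂Measure.pi μ
      = ∫⁻ x in (fun x i => ‖x i‖) ⁻¹' s, f x ∂Measure.pi μ := by
  have hindicator : ∀ g : (∀ i, E i) → ℝ≥0∞,
      ∫⁻ x in (fun x i => ‖x i‖) ⁻¹' s, g x ∂Measure.pi μ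
        = ∫⁻ x, g x * s.indicator 1 (fun i => ‖x i‖) ∂Measure.pi μ := fun g => by
    rw [← lintegral_indicator (hs.preimage (by fun_prop))]
    refine lintegral_congr fun x => ?_
    by_cases hx : (fun i => ‖x i‖) ∈ s <;> simp [hx]
  rw [hindicator, hindicator]
  exact lintegral_sphericalMean_mul_radial hf (measurable_one.indicator hs)

end SphericalMean

theorem toSphere_univ_euclideanSpace (k : ℕ) :
    (volume : Measure (EuclideanSpace ℝ (Fin k))).toSphere univ = ENNReal.ofReal (omegaN k) := by
  rcases Nat.eq_zero_or_pos k with rfl | hk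
  -- both sides vanish: the sphere in `ℝ⁰` is empty, and `omegaN 0 = 2 / Γ 0 = 0` since `Γ 0 = 0`
  · simp [Measure.toSphere_apply_univ, omegaN]
  have : Nonempty (Fin k) := ⟨⟨0, hk⟩⟩
  have hΓ : Real.Gamma ((k : ℝ) / 2 + 1) = k / 2 * Real.Gamma (k / 2) :=
    Real.Gamma_add_one (by positivity)
  have hsqrt : √Real.pi ^ k = Real.pi ^ ((k : ℝ) / 2) := by
    rw [Real.sqrt_eq_rpow, ← Real.rpow_natCast, ← Real.rpow_mul Real.pi_pos.le]
    ring_nf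
  have := Real.Gamma_pos_of_pos (by positivity : (0 : ℝ) < k / 2)
  rw [Measure.toSphere_apply_univ, EuclideanSpace.volume_ball, finrank_euclideanSpace_fin,
    Fintype.card_fin, ENNReal.ofReal_one, one_pow, one_mul, ← ENNReal.ofReal_natCast,
    ← ENNReal.ofReal_mul (by positivity), hsqrt, hΓ, omegaN]
  congr 1
  field_simp

theorem sphAvgM_eq_sphericalMean (m : ℕ) (n : Fin m → ℕ) :
    sphAvgM m n = sphericalMean fun _ => volume := by
  have homega : ∀ k, 0 ≤ omegaN k := fun k =>
    div_nonneg (by positivity) (Real.Gamma_nonneg_of_nonneg (by positivity))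
  ext f x
  rw [sphAvgM, sphericalMean, laverage_eq', lintegral_smul_measure, Measure.pi_univ,
    ENNReal.ofReal_prod_of_nonneg fun i _ => homega (n i)]
  simp only [toSphere_univ_euclideanSpace, smul_eq_mul]

section Euclidean

variable {m : ℕ} {n : Fin m → ℕ}

theorem prodFracHardy_sphAvgM (hn : ∀ i, 1 ≤ n i) (β : Fin m → ℝ)
    {f : (∀ i, EuclideanSpace ℝ (Fin (n i))) → ℝ≥0∞} (hf : Measurable f) :
    prodFracHardy m n β (sphAvgM m n f) = prodFracHardy m n β f := by
  have : ∀ i, NeZero (n i) := fun i => NeZero.of_pos (hn i)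
  ext x
  have hball : {y : ∀ i, EuclideanSpace ℝ (Fin (n i)) | ∀ i, ‖y i‖ < ‖x i‖}
      = (fun y i => ‖y i‖) ⁻¹' univ.pi fun i => Iio ‖x i‖ := by
    ext; simp
  rw [prodFracHardy, prodFracHardy, sphAvgM_eq_sphericalMean, hball, volume_pi]
  congr 1
  exact setLIntegral_sphericalMean_of_radial (μ := fun _ => volume) hf
    (MeasurableSet.univ_pi fun i => measurableSet_Iio (a := ‖x i‖))

theorem hardyRatio_le_hardyRatio_sphAvgM (hn : ∀ i, 1 ≤ n i) (β α γ : Fin m → ℝ)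
    {p : ℝ} (q : ℝ) (hp : 1 ≤ p) {f : (∀ i, EuclideanSpace ℝ (Fin (n i))) → ℝ≥0∞}
    (hf : Measurable f) :
    hardyRatio m n β α γ p q f ≤ hardyRatio m n β α γ p q (sphAvgM m n f) := by
  have : ∀ i, NeZero (n i) := fun i => NeZero.of_pos (hn i)
  rw [hardyRatio, hardyRatio, prodFracHardy_sphAvgM hn β hf]
  refine ENNReal.div_le_div_left (ENNReal.rpow_le_rpow ?_ (by positivity)) _
  rw [sphAvgM_eq_sphericalMean]
  exact lintegral_sphericalMean_rpow_mul_radial_le (μ := fun _ => volume) hf hp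
    (w := fun v => ENNReal.ofReal (∏ i, v i ^ γ i)) (by fun_prop)

end Euclidean

theorem radial_reduction_general (m : ℕ) (n : Fin m → ℕ) (hn : ∀ i, 1 ≤ n i)
    (β α γ : Fin m → ℝ) (p q : ℝ) (hp : 1 ≤ p) :
    (∀ f : (∀ i, EuclideanSpace ℝ (Fin (n i))) → ℝ≥0∞, Measurable f →
      hardyRatio m n β α γ p q f ≤ hardyRatio m n β α γ p q (sphAvgM m n f)) ∧
    (⨆ f : {f : (∀ i, EuclideanSpace ℝ (Fin (n i))) → ℝ≥0∞ // Measurable f},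
        hardyRatio m n β α γ p q f.1
      = ⨆ f : {f : (∀ i, EuclideanSpace ℝ (Fin (n i))) → ℝ≥0∞ //
          Measurable f ∧ ∃ h : (Fin m → ℝ) → ℝ≥0∞, ∀ x, f x = h fun i => ‖x i‖},
        hardyRatio m n β α γ p q f.1) := by
  have hratio := fun f (hf : Measurable f) => hardyRatio_le_hardyRatio_sphAvgM hn β α γ q hp hf
  refine ⟨hratio, le_antisymm (iSup_le fun f => (hratio f.1 f.2).trans ?_)
    (iSup_le fun f => le_iSup_of_le ⟨f.1, f.2.1⟩ le_rfl)⟩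
  have hradial : Measurable (sphAvgM m n f.1) ∧
      ∃ h : (Fin m → ℝ) → ℝ≥0∞, ∀ x, sphAvgM m n f.1 x = h fun i => ‖x i‖ := by
    rw [sphAvgM_eq_sphericalMean]
    exact ⟨measurable_sphericalMean f.2, exists_sphericalMean_eq_comp_norm f.1⟩
  exact le_iSup_of_le ⟨sphAvgM m n f.1, hradial⟩ le_rfl

/-- The operator norm of `𝓗_{β₁,…,β_m}` from `L^p(|x|^γ)` to `L^q(|x|^α)` is attained on
radial functions: the ratio for `f` is dominated by the ratio for the spherical average
of `f`, and the supremum of the ratios over all functions equals the supremum over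
radial functions. -/
theorem radial_reduction (m : ℕ) (hm : 1 ≤ m) (n : Fin m → ℕ) (hn : ∀ i, 1 ≤ n i)
    (β α γ : Fin m → ℝ) (p q : ℝ) (hp : 1 ≤ p) (hpq : p < q)
    (hβ0 : ∀ i, 0 ≤ β i) (hβn : ∀ i, β i < n i) :
    (∀ f : (∀ i, EuclideanSpace ℝ (Fin (n i))) → ℝ≥0∞, Measurable f →
      hardyRatio m n β α γ p q f ≤ hardyRatio m n β α γ p q (sphAvgM m n f)) ∧
    (⨆ f : {f : (∀ i, EuclideanSpace ℝ (Fin (n i))) → ℝ≥0∞ // Measurable f},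
        hardyRatio m n β α γ p q f.1
      = ⨆ f : {f : (∀ i, EuclideanSpace ℝ (Fin (n i))) → ℝ≥0∞ //
          Measurable f ∧ ∃ h : (Fin m → ℝ) → ℝ≥0∞, ∀ x, f x = h fun i => ‖x i‖},
        hardyRatio m n β α γ p q f.1) :=
  radial_reduction_general m n hn β α γ p q hp
end

section
/- Fix n ≥ 1, 1 < p < ∞ and γ < n(p-1), and for q ∈ (p,∞) set (α+n)/q = (γ+n)/p and C*_{pq} = |S^{n-1}|^{1/q-1/p} n^{1/p-1/q} (n(p-1)/(n(p-1)-γ))^{1/p'+1/q} (p'/q)^{1/q} ((p/(q-p)) B(p/(q-p), pq/(q'(q-p))))^{1/q-1/p}. Then C*_{pq} → p/(p-1-γ/n) as q → p⁺. -/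
open MeasureTheory Set Filter
open scoped ENNReal Topology

/-!
Put `ε = q - p`. The Beta factor is `B(a/ε + 1, b/ε + 1)` with `a = 2p - q → p` and
`b = q(p - 1) → p(p - 1)`, the integral of the `1/ε`-th power of `t^a (1 - t)^b`, so its `ε`-th
root tends to the maximum of `t^p (1 - t)^(p(p - 1))` over `(0, 1)`, attained at `t = 1/p`
(Laplace's principle: the maximum bounds the integral above, a short interval next to the maximiser
bounds it below). As `1/q - 1/p = -ε/(pq)`, the Beta factor tends to `p / (p - 1)^(1 - 1/p)`, the
prefactor `p/(q - p)` only contributes `ε log ε → 0`, and the remaining factors are continuous at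
`q = p`.
-/

open Real

section BetaBounds

variable {α β : ℝ}

lemma betaFn_add_one_add_one (α β : ℝ) :
    betaFn (α + 1) (β + 1) = ∫ t in Ioo (0 : ℝ) 1, t ^ α * (1 - t) ^ β := by
  simp only [betaFn, add_sub_cancel_right]

lemma integrableOn_rpow_mul_one_sub_rpow (hα : 0 ≤ α) (hβ : 0 ≤ β) :
    IntegrableOn (fun t : ℝ => t ^ α * (1 - t) ^ β) (Ioo 0 1) := by
  have hc : Continuous fun t : ℝ => t ^ α * (1 - t) ^ β := by
    fun_prop (disch := assumption)
  exact (hc.integrableOn_Icc (a := 0) (b := 1)).mono_set Ioo_subset_Icc_self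

lemma mul_log_add_mul_log_one_sub_le {t : ℝ} (ht₀ : 0 < t) (ht₁ : t < 1)
    (hα : 0 < α) (hβ : 0 < β) :
    α * log t + β * log (1 - t) ≤ α * log (α / (α + β)) + β * log (β / (α + β)) := by
  have hs : 0 < α + β := by linarith
  -- `log x ≤ x - 1` at `t / t₀` and at `(1 - t) / (1 - t₀)`, where `t₀ = α / (α + β)`
  have key : ∀ {x c : ℝ}, 0 < x → 0 < c →
      c * log x - c * log (c / (α + β)) ≤ x * (α + β) - c := fun {x c} hx hc => by
    have hlog := log_le_sub_one_of_pos (show 0 < x / (c / (α + β)) by positivity)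
    rw [log_div hx.ne' (by positivity)] at hlog
    calc c * log x - c * log (c / (α + β)) = c * (log x - log (c / (α + β))) := by ring
      _ ≤ c * (x / (c / (α + β)) - 1) := mul_le_mul_of_nonneg_left hlog hc.le
      _ = x * (α + β) - c := by field_simp
  linarith [key ht₀ hα, key (sub_pos.2 ht₁) hβ]

lemma betaFn_add_one_add_one_le (hα : 0 < α) (hβ : 0 < β) :
    betaFn (α + 1) (β + 1) ≤ exp (α * log (α / (α + β)) + β * log (β / (α + β))) := by
  rw [betaFn_add_one_add_one]
  calc ∫ t in Ioo (0 : ℝ) 1, t ^ α * (1 - t) ^ β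
      ≤ ∫ _ in Ioo (0 : ℝ) 1, exp (α * log (α / (α + β)) + β * log (β / (α + β))) := by
        refine setIntegral_mono_on (integrableOn_rpow_mul_one_sub_rpow hα.le hβ.le)
          (integrableOn_const (by simp)) measurableSet_Ioo fun t ⟨ht₀, ht₁⟩ => ?_
        rw [rpow_def_of_pos ht₀, rpow_def_of_pos (sub_pos.2 ht₁), ← exp_add, exp_le_exp]
        linarith [mul_log_add_mul_log_one_sub_le ht₀ ht₁ hα hβ]
    _ = exp (α * log (α / (α + β)) + β * log (β / (α + β))) := by simp

lemma le_betaFn_add_one_add_one (hα : 0 ≤ α) (hβ : 0 ≤ β) {u v : ℝ} (hu : 0 < u) (huv : u ≤ v)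
    (hv : v < 1) : (v - u) * (u ^ α * (1 - v) ^ β) ≤ betaFn (α + 1) (β + 1) := by
  have hint := integrableOn_rpow_mul_one_sub_rpow hα hβ
  have hsub : Ioo u v ⊆ Ioo 0 1 := Ioo_subset_Ioo hu.le hv.le
  rw [betaFn_add_one_add_one]
  calc (v - u) * (u ^ α * (1 - v) ^ β) = ∫ _ in Ioo u v, u ^ α * (1 - v) ^ β := by
        simp [Real.volume_real_Ioo_of_le huv]
    _ ≤ ∫ t in Ioo u v, t ^ α * (1 - t) ^ β := by
        refine setIntegral_mono_on (integrableOn_const (by simp)) (hint.mono_set hsub)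
          measurableSet_Ioo fun t ⟨hut, htv⟩ => ?_
        have h1v : 0 ≤ 1 - v := by linarith
        have : 0 ≤ t := by linarith
        gcongr
    _ ≤ ∫ t in Ioo (0 : ℝ) 1, t ^ α * (1 - t) ^ β := by
        refine setIntegral_mono_set hint ?_ hsub.eventuallyLE
        filter_upwards [self_mem_ae_restrict measurableSet_Ioo] with t ⟨ht₀, ht₁⟩
        have : 0 ≤ 1 - t := by linarith
        positivity

lemma betaFn_add_one_add_one_pos (hα : 0 ≤ α) (hβ : 0 ≤ β) : 0 < betaFn (α + 1) (β + 1) :=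
  (by positivity : (0 : ℝ) < (1 / 2 - 1 / 4) * ((1 / 4) ^ α * (1 - 1 / 2) ^ β)).trans_le
    (le_betaFn_add_one_add_one hα hβ (by norm_num) (by norm_num) (by norm_num))

lemma log_betaFn_add_one_add_one_le (hα : 0 < α) (hβ : 0 < β) :
    log (betaFn (α + 1) (β + 1)) ≤ α * log (α / (α + β)) + β * log (β / (α + β)) :=
  (log_le_iff_le_exp (betaFn_add_one_add_one_pos hα.le hβ.le)).2
    (betaFn_add_one_add_one_le hα hβ)

lemma le_log_betaFn_add_one_add_one (hα : 0 ≤ α) (hβ : 0 ≤ β) {u v : ℝ} (hu : 0 < u)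
    (huv : u < v) (hv : v < 1) :
    log (v - u) + α * log u + β * log (1 - v) ≤ log (betaFn (α + 1) (β + 1)) := by
  have h1v : 0 < 1 - v := by linarith
  have := log_le_log (by have := sub_pos.2 huv; positivity)
    (le_betaFn_add_one_add_one hα hβ hu huv.le hv)
  rwa [log_mul (sub_pos.2 huv).ne' (by positivity), log_mul (by positivity) (by positivity),
    log_rpow hu, log_rpow h1v, ← add_assoc] at this

end BetaBounds

section Asymptotics

variable {ι : Type*} {l : Filter ι} {ε a b : ι → ℝ}

lemma eventually_mul_log_betaFn_le (hε : ∀ᶠ i in l, 0 < ε i) (ha : ∀ᶠ i in l, 0 < a i)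
    (hb : ∀ᶠ i in l, 0 < b i) :
    ∀ᶠ i in l, ε i * log (betaFn (a i / ε i + 1) (b i / ε i + 1)) ≤
      a i * log (a i / (a i + b i)) + b i * log (b i / (a i + b i)) := by
  filter_upwards [hε, ha, hb] with i hε ha hb
  have hscale : ∀ x, x / ε i / (a i / ε i + b i / ε i) = x / (a i + b i) := fun x => by
    field_simp
  calc ε i * log (betaFn (a i / ε i + 1) (b i / ε i + 1))
      ≤ ε i * (a i / ε i * log (a i / (a i + b i)) + b i / ε i * log (b i / (a i + b i))) := by
        rw [← hscale (a i), ← hscale (b i)]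
        gcongr
        exact log_betaFn_add_one_add_one_le (by positivity) (by positivity)
    _ = a i * log (a i / (a i + b i)) + b i * log (b i / (a i + b i)) := by
        field_simp

lemma eventually_le_mul_log_betaFn (hε : ∀ᶠ i in l, 0 < ε i) (ha : ∀ᶠ i in l, 0 ≤ a i)
    (hb : ∀ᶠ i in l, 0 ≤ b i) {u v : ℝ} (hu : 0 < u) (huv : u < v) (hv : v < 1) :
    ∀ᶠ i in l, ε i * log (v - u) + a i * log u + b i * log (1 - v) ≤
      ε i * log (betaFn (a i / ε i + 1) (b i / ε i + 1)) := by
  filter_upwards [hε, ha, hb] with i hε ha hb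
  calc ε i * log (v - u) + a i * log u + b i * log (1 - v)
      = ε i * (log (v - u) + a i / ε i * log u + b i / ε i * log (1 - v)) := by
        field_simp
    _ ≤ ε i * log (betaFn (a i / ε i + 1) (b i / ε i + 1)) := by
        gcongr
        exact le_log_betaFn_add_one_add_one (by positivity) (by positivity) hu huv hv

theorem tendsto_mul_log_betaFn {a₀ b₀ : ℝ} (hε : Tendsto ε l (𝓝[>] 0))
    (ha : Tendsto a l (𝓝 a₀)) (hb : Tendsto b l (𝓝 b₀)) (ha₀ : 0 < a₀) (hb₀ : 0 < b₀) :
    Tendsto (fun i => ε i * log (betaFn (a i / ε i + 1) (b i / ε i + 1))) l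
      (𝓝 (a₀ * log (a₀ / (a₀ + b₀)) + b₀ * log (b₀ / (a₀ + b₀)))) := by
  have hε₀ : Tendsto ε l (𝓝 0) := tendsto_nhds_of_tendsto_nhdsWithin hε
  have hε_pos : ∀ᶠ i in l, 0 < ε i := eventually_mem_of_tendsto_nhdsWithin hε
  have ha_pos : ∀ᶠ i in l, 0 < a i := ha.eventually_const_lt ha₀
  have hb_pos : ∀ᶠ i in l, 0 < b i := hb.eventually_const_lt hb₀
  have hs₀ : a₀ + b₀ ≠ 0 := by positivity
  refine tendsto_order.2 ⟨fun c hc => ?_, fun c hc => ?_⟩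
  · -- bound the integral below on `(u, t₀)`, `t₀` the maximiser of the integrand, with `u` so
    -- close to `t₀` that the bound still exceeds `c`
    set t₀ := a₀ / (a₀ + b₀)
    have ht₀ : 0 < t₀ := by positivity
    have ht₀₁ : t₀ < 1 := (div_lt_one (by positivity)).2 (by linarith)
    have hone_sub : 1 - t₀ = b₀ / (a₀ + b₀) := by
      rw [eq_div_iff hs₀, sub_mul, div_mul_cancel₀ _ hs₀]; ring
    have hg : Tendsto (fun u => a₀ * log u + b₀ * log (1 - t₀)) (𝓝[<] t₀)
        (𝓝 (a₀ * log t₀ + b₀ * log (1 - t₀))) :=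
      (((continuousAt_log ht₀.ne').tendsto.const_mul a₀).add_const _).mono_left
        nhdsWithin_le_nhds
    rw [hone_sub] at hg
    obtain ⟨u, hcu, hu₀, hut₀⟩ :=
      ((hg.eventually (lt_mem_nhds hc)).and (Ioo_mem_nhdsLT ht₀)).exists
    have hlower : Tendsto (fun i => ε i * log (t₀ - u) + a i * log u + b i * log (1 - t₀)) l
        (𝓝 (0 * log (t₀ - u) + a₀ * log u + b₀ * log (1 - t₀))) :=
      ((hε₀.mul_const _).add (ha.mul_const _)).add (hb.mul_const _)
    rw [zero_mul, zero_add, hone_sub] at hlower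
    filter_upwards [hlower.eventually (lt_mem_nhds hcu), eventually_le_mul_log_betaFn hε_pos
      (ha_pos.mono fun _ => le_of_lt) (hb_pos.mono fun _ => le_of_lt) hu₀ hut₀ ht₀₁]
      with i hci hi
    rw [hone_sub] at hi
    exact hci.trans_le hi
  · have hupper : Tendsto (fun i => a i * log (a i / (a i + b i)) + b i * log (b i / (a i + b i)))
        l (𝓝 (a₀ * log (a₀ / (a₀ + b₀)) + b₀ * log (b₀ / (a₀ + b₀)))) :=
      (ha.mul ((ha.div (ha.add hb) hs₀).log (by positivity))).add
        (hb.mul ((hb.div (ha.add hb) hs₀).log (by positivity)))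
    filter_upwards [hupper.eventually (gt_mem_nhds hc),
      eventually_mul_log_betaFn_le hε_pos ha_pos hb_pos] with i hci hi
    exact hi.trans_lt hci

end Asymptotics

lemma omegaN_pos {n : ℕ} (hn : 0 < n) : 0 < omegaN n := by
  have := Gamma_pos_of_pos (s := n / 2) (by positivity)
  unfold omegaN
  positivity

lemma tendsto_rpow_mul_betaFn {p : ℝ} (hp : 1 < p) :
    Tendsto (fun q : ℝ => ((p / (q - p)) *
        betaFn (p / (q - p)) (p * q / ((q / (q - 1)) * (q - p)))) ^ (1 / q - 1 / p))
      (𝓝[>] p) (𝓝 (p / (p - 1) ^ (1 - 1 / p))) := by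
  have hp₀ : 0 < p := by linarith
  have hp₁ : 0 < p - 1 := by linarith
  have hid : Tendsto (fun q : ℝ => q) (𝓝[>] p) (𝓝 p) :=
    tendsto_nhdsWithin_of_tendsto_nhds tendsto_id
  have hε : Tendsto (fun q => q - p) (𝓝[>] p) (𝓝[>] 0) :=
    tendsto_nhdsWithin_iff.2 ⟨by simpa using hid.sub_const p,
      eventually_nhdsWithin_of_forall fun q (hq : p < q) => sub_pos.2 hq⟩
  have hB := tendsto_mul_log_betaFn hε (a := fun q => 2 * p - q) (b := fun q => q * (p - 1))
    (by simpa [two_mul] using hid.const_sub (2 * p)) (hid.mul_const (p - 1)) hp₀ (by positivity)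
  have hεlog : Tendsto (fun q => (q - p) * log (q - p)) (𝓝[>] p) (𝓝 0) :=
    (continuous_mul_log.tendsto' 0 0 (by simp)).comp (tendsto_nhds_of_tendsto_nhdsWithin hε)
  have hlog := ((hid.const_mul p).inv₀ (by positivity)).neg.mul
    (((tendsto_nhds_of_tendsto_nhdsWithin hε).mul_const (log p)).sub hεlog |>.add hB)
  have hlim : -(p * p)⁻¹ * (0 * log p - 0 + (p * log (p / (p + p * (p - 1))) +
      p * (p - 1) * log (p * (p - 1) / (p + p * (p - 1))))) = log (p / (p - 1) ^ (1 - 1 / p)) := by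
    rw [show p / (p + p * (p - 1)) = p⁻¹ by field_simp; ring,
      show p * (p - 1) / (p + p * (p - 1)) = (p - 1) / p by field_simp; ring,
      log_inv, log_div hp₁.ne' hp₀.ne', log_div hp₀.ne' (by positivity), log_rpow hp₁]
    field_simp
    ring
  rw [hlim] at hlog
  rw [← exp_log (show 0 < p / (p - 1) ^ (1 - 1 / p) by positivity)]
  refine ((continuous_exp.tendsto _).comp hlog).congr' ?_
  filter_upwards [Ioo_mem_nhdsGT (show p < 2 * p by linarith)] with q ⟨hpq, hq2p⟩
  have hqp : 0 < q - p := sub_pos.2 hpq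
  have hz : p / (q - p) = (2 * p - q) / (q - p) + 1 := by field_simp; ring
  have hq : q ≠ 0 := by linarith
  have hw : p * q / ((q / (q - 1)) * (q - p)) = q * (p - 1) / (q - p) + 1 := by
    have : q - 1 ≠ 0 := by linarith
    field_simp
    ring
  have hpos := betaFn_add_one_add_one_pos (α := (2 * p - q) / (q - p))
    (β := q * (p - 1) / (q - p)) (div_nonneg (by linarith) hqp.le)
    (div_nonneg (by nlinarith) hqp.le)
  rw [← hz] at hpos
  simp only [Function.comp_apply]
  rw [hw, ← hz, rpow_def_of_pos (mul_pos (div_pos hp₀ hqp) hpos),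
    log_mul (by positivity) hpos.ne', log_div hp₀.ne' hqp.ne']
  congr 1
  field_simp
  ring

/-- The sharp constant `C*_{pq}` tends to `p/(p-1-γ/n)` as `q → p⁺`. -/
theorem sharp_constant_limit (n : ℕ) (hn : 1 ≤ n) (p γ : ℝ)
    (hp : 1 < p) (hγ : γ < n * (p - 1)) :
    Tendsto (fun q : ℝ =>
        (omegaN n) ^ (1 / q - 1 / p) * (n : ℝ) ^ (1 / p - 1 / q) *
          ((n * (p - 1)) / (n * (p - 1) - γ)) ^ ((1 - 1 / p) + 1 / q) *
          ((p / (p - 1)) / q) ^ (1 / q) *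
          ((p / (q - p)) *
            betaFn (p / (q - p)) (p * q / ((q / (q - 1)) * (q - p)))) ^ (1 / q - 1 / p))
      (𝓝[>] p) (𝓝 (p / (p - 1 - γ / n))) := by
  have hn₀ : (0 : ℝ) < n := by exact_mod_cast hn
  have hp₀ : 0 < p := by linarith
  have hp₁ : 0 < p - 1 := by linarith
  have hK : 0 < n * (p - 1) / (n * (p - 1) - γ) := div_pos (by positivity) (by linarith)
  have hcont : ContinuousAt (fun q : ℝ => omegaN n ^ (1 / q - 1 / p) * (n : ℝ) ^ (1 / p - 1 / q) *
      ((n * (p - 1)) / (n * (p - 1) - γ)) ^ ((1 - 1 / p) + 1 / q) *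
      ((p / (p - 1)) / q) ^ (1 / q)) p := by
    have hinv : ContinuousAt (fun q : ℝ => 1 / q) p :=
      continuousAt_const.div continuousAt_id hp₀.ne'
    exact (((continuousAt_const.rpow (hinv.sub continuousAt_const) (.inl (omegaN_pos hn).ne')).mul
      (continuousAt_const.rpow (continuousAt_const.sub hinv) (.inl hn₀.ne'))).mul
      (continuousAt_const.rpow (continuousAt_const.add hinv) (.inl hK.ne'))).mul
      ((continuousAt_const.div continuousAt_id hp₀.ne').rpow hinv
        (.inl (div_pos (div_pos hp₀ hp₁) hp₀).ne'))
  convert (hcont.tendsto.mono_left nhdsWithin_le_nhds).mul (tendsto_rpow_mul_betaFn hp) using 2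
  have hsplit : (p - 1) ^ (1 - 1 / p) * (p - 1) ^ (1 / p) = p - 1 := by
    rw [← rpow_add hp₁, sub_add_cancel, rpow_one]
  rw [sub_self, rpow_zero, rpow_zero, sub_add_cancel, rpow_one, div_div_cancel_left' hp₀.ne',
    inv_rpow hp₁.le, mul_assoc _ _ (p / _), inv_mul_eq_div, div_div, hsplit]
  field_simp
end
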